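/- arXiv:2007.12282 — 8 statements merged into one kernel-verified Lean document; each statement's English description precedes it below -/
import Mathlib

section
/- Let (a_n)_{n≥1} and (b_n)_{n≥1} be real sequences with b_n < 0 < a_n for every n ≥ 1 (signature (−,+)), and let f_n = A_n/B_n denote the convergents of K(a_n/b_n). Let (u_n)_{n≥-1} satisfy u_n = b_n u_{n-1} + a_n u_{n-2} for n ≥ 1, with u_{-1} > 0. Then for every even n ≥ 1, u_n > 0 if and only if f_n > −u_0/u_{-1}, and for every odd n ≥ 1, u_n > 0 if and only if f_n < −u_0/u_{-1}. (In particular, B_n > 0 for even n ≥ 1 and B_n < 0 for odd n ≥ 1, so every convergent f_n with n ≥ 1 is well defined.) -/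
/-!
Every solution of the recurrence is the superposition `u n = u (-1) * A n + u 0 * B n` of the
canonical numerators and denominators, since both sides solve the same second-order recurrence
with the same initial values. The twisted denominators `(-1) ^ n * B n` solve the recurrence with
coefficients `(a n, -b n)`, which are positive, so they stay positive; this is the sign pattern of
`B n`. Dividing the superposition by `u (-1) * B n` then turns the sign of `u n` into the position
of `f n` relative to `-u 0 / u (-1)`, the comparison flipping with the sign of `B n`.
-/

def SatisfiesRecurrence {R : Type*} [Mul R] [Add R] (a b u : ℤ → R) : Prop :=
  ∀ n : ℤ, 1 ≤ n → u n = b n * u (n - 1) + a n * u (n - 2)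

namespace SatisfiesRecurrence

section CommRing

variable {R : Type*} [CommRing R] {a b v w : ℤ → R}

theorem linear_combination (hv : SatisfiesRecurrence a b v) (hw : SatisfiesRecurrence a b w)
    (c d : R) : SatisfiesRecurrence a b (fun n => c * v n + d * w n) := by
  intro n hn
  simp only [hv n hn, hw n hn]
  ring

theorem eq_of_eq_of_eq (hv : SatisfiesRecurrence a b v) (hw : SatisfiesRecurrence a b w)
    (h₁ : v (-1) = w (-1)) (h₀ : v 0 = w 0) : ∀ n : ℤ, -1 ≤ n → v n = w n := by
  suffices h : ∀ n : ℤ, -1 ≤ n → v n = w n ∧ v (n + 1) = w (n + 1) from fun n hn => (h n hn).1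
  intro n hn
  induction n, hn using Int.leInduction with
  | base => exact ⟨h₁, h₀⟩
  | succ n hn ih =>
    obtain ⟨hn₀, hn₁⟩ := ih
    refine ⟨hn₁, ?_⟩
    have hstep : (1 : ℤ) ≤ n + 1 + 1 := by omega
    rw [hv _ hstep, hw _ hstep, add_sub_cancel_right, show n + 1 + 1 - 2 = n by ring, hn₀, hn₁]

theorem eq_mul_add_mul {A B u : ℤ → R} (hA : SatisfiesRecurrence a b A)
    (hB : SatisfiesRecurrence a b B) (hu : SatisfiesRecurrence a b u)
    (hA₁ : A (-1) = 1) (hA₀ : A 0 = 0) (hB₁ : B (-1) = 0) (hB₀ : B 0 = 1) :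
    ∀ n : ℤ, -1 ≤ n → u n = u (-1) * A n + u 0 * B n :=
  hu.eq_of_eq_of_eq (hA.linear_combination hB (u (-1)) (u 0))
    (by simp [hA₁, hB₁]) (by simp [hA₀, hB₀])

end CommRing

theorem neg_one_zpow_mul {R : Type*} [Field R] {a b u : ℤ → R}
    (hu : SatisfiesRecurrence a b u) :
    SatisfiesRecurrence a (-b) (fun n => (-1) ^ n * u n) := by
  intro n hn
  have h₁ : (-1 : R) ^ n = -(-1) ^ (n - 1) := by
    rw [zpow_sub_one₀ (neg_ne_zero.mpr one_ne_zero)]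
    simp
  have h₂ : (-1 : R) ^ n = (-1) ^ (n - 2) := by
    rw [zpow_sub₀ (neg_ne_zero.mpr one_ne_zero)]
    simp
  simp only [Pi.neg_apply]
  rw [hu n hn]
  linear_combination (b n * u (n - 1)) * h₁ + (a n * u (n - 2)) * h₂

theorem pos {R : Type*} [CommRing R] [LinearOrder R] [IsStrictOrderedRing R] {a b u : ℤ → R}
    (hu : SatisfiesRecurrence a b u) (ha : ∀ n : ℤ, 1 ≤ n → 0 ≤ a n)
    (hb : ∀ n : ℤ, 1 ≤ n → 0 < b n) (h₁ : 0 ≤ u (-1)) (h₀ : 0 < u 0) :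
    ∀ n : ℤ, 0 ≤ n → 0 < u n := by
  suffices h : ∀ n : ℤ, 0 ≤ n → 0 ≤ u (n - 1) ∧ 0 < u n from fun n hn => (h n hn).2
  intro n hn
  induction n, hn using Int.leInduction with
  | base => exact ⟨h₁, h₀⟩
  | succ n hn ih =>
    obtain ⟨hn₁, hn₀⟩ := ih
    refine ⟨by rw [add_sub_cancel_right]; exact hn₀.le, ?_⟩
    have hstep : (1 : ℤ) ≤ n + 1 := by omega
    rw [hu _ hstep, add_sub_cancel_right, show n + 1 - 2 = n - 1 by ring]
    exact add_pos_of_pos_of_nonneg (mul_pos (hb _ hstep) hn₀) (mul_nonneg (ha _ hstep) hn₁)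

end SatisfiesRecurrence

section LinearOrderedField

variable {K : Type*} [Field K] [LinearOrder K] [IsStrictOrderedRing K] {p q c x : K}

theorem pos_mul_add_mul_iff_of_pos (hp : 0 < p) (hq : 0 < q) :
    0 < p * x + c * q ↔ -(c / p) < x / q := by
  rw [← neg_div, div_lt_div_iff₀ hp hq]
  constructor <;> intro h <;> linarith

theorem pos_mul_add_mul_iff_of_neg (hp : 0 < p) (hq : q < 0) :
    0 < p * x + c * q ↔ x / q < -(c / p) := by
  rw [← neg_div, ← neg_div_neg_eq x q, div_lt_div_iff₀ (neg_pos.mpr hq) hp]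
  constructor <;> intro h <;> linarith

end LinearOrderedField

/-- For a continued fraction `K(a_n/b_n)` with signature `(−,+)`
(`b n < 0 < a n` for all `n ≥ 1`), canonical numerators `A`, denominators `B`, convergents
`f n = A n / B n`, and a solution `u` of the recurrence with `u (-1) > 0`: for even `n ≥ 1`,
`u n > 0 ↔ f n > -u 0 / u (-1)`; for odd `n ≥ 1`, `u n > 0 ↔ f n < -u 0 / u (-1)`.
In particular `B n > 0` for even `n ≥ 1` and `B n < 0` for odd `n ≥ 1`. -/
theorem stmt_2 (a b A B u : ℤ → ℝ)
    (hsig : ∀ n : ℤ, 1 ≤ n → b n < 0 ∧ 0 < a n)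
    (hA1 : A (-1) = 1) (hA0 : A 0 = 0)
    (hArec : ∀ n : ℤ, 1 ≤ n → A n = b n * A (n - 1) + a n * A (n - 2))
    (hB1 : B (-1) = 0) (hB0 : B 0 = 1)
    (hBrec : ∀ n : ℤ, 1 ≤ n → B n = b n * B (n - 1) + a n * B (n - 2))
    (hu : ∀ n : ℤ, 1 ≤ n → u n = b n * u (n - 1) + a n * u (n - 2))
    (hum1 : 0 < u (-1)) :
    (∀ n : ℤ, 1 ≤ n → Even n → 0 < B n) ∧
    (∀ n : ℤ, 1 ≤ n → Odd n → B n < 0) ∧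
    (∀ n : ℤ, 1 ≤ n → Even n → (0 < u n ↔ -(u 0 / u (-1)) < A n / B n)) ∧
    (∀ n : ℤ, 1 ≤ n → Odd n → (0 < u n ↔ A n / B n < -(u 0 / u (-1)))) := by
  have hBtwist : ∀ n : ℤ, 0 ≤ n → 0 < (-1) ^ n * B n :=
    SatisfiesRecurrence.pos (SatisfiesRecurrence.neg_one_zpow_mul hBrec)
      (fun n hn => (hsig n hn).2.le) (fun n hn => neg_pos.mpr (hsig n hn).1)
      (by simp [hB1]) (by simp [hB0])
  have hBeven : ∀ n : ℤ, 1 ≤ n → Even n → 0 < B n := fun n hn he => by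
    simpa [he.neg_one_zpow] using hBtwist n (by omega)
  have hBodd : ∀ n : ℤ, 1 ≤ n → Odd n → B n < 0 := fun n hn ho => by
    simpa [ho.neg_one_zpow] using hBtwist n (by omega)
  have hsup : ∀ n : ℤ, 1 ≤ n → u n = u (-1) * A n + u 0 * B n := fun n hn =>
    SatisfiesRecurrence.eq_mul_add_mul hArec hBrec hu hA1 hA0 hB1 hB0 n (by omega)
  refine ⟨hBeven, hBodd, fun n hn he => ?_, fun n hn ho => ?_⟩
  · rw [hsup n hn]
    exact pos_mul_add_mul_iff_of_pos hum1 (hBeven n hn he)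
  · rw [hsup n hn]
    exact pos_mul_add_mul_iff_of_neg hum1 (hBodd n hn ho)
end

section
/- Let g3(n)=α1 n+α0, g2(n)=β1 n+β0, g1(n)=γ1 n+γ0 be real polynomials of degree at most 1 with g3(n) > 0, g2(n) < 0 and g1(n) > 0 for all integers n ≥ 0 (signature (−,+)), and set b_n = g2(n)/g3(n), a_n = g1(n)/g3(n). Suppose the convergents f_n of K(a_n/b_n) converge to a finite limit μ. Let (u_n)_{n≥-1} be a solution of g3(n)u_n = g2(n)u_{n-1} + g1(n)u_{n-2} (n ≥ 1) with u_{-1} > 0 and u_0 > 0. Then the following are equivalent: (1) u_n ≥ 0 for all n ≥ −1; (2) (u_n) is a minimal solution of this recurrence; (3) −u_0/u_{-1} = μ. -/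
open Filter

/-- `u` solves the second-order recurrence `p n * u n = q n * u (n-1) + r n * u (n-2)`
for all `n ≥ 1`. -/
def IsSol (p q r u : ℤ → ℝ) : Prop :=
  ∀ n : ℤ, 1 ≤ n → p n * u n = q n * u (n - 1) + r n * u (n - 2)

/-- A sequence (indexed from `-1`) is nontrivial if it is not identically zero. -/
def SeqNontrivial (u : ℤ → ℝ) : Prop :=
  ∃ n : ℤ, -1 ≤ n ∧ u n ≠ 0

/-- Linear independence of two sequences indexed from `-1`. -/
def SeqLinIndep (u v : ℤ → ℝ) : Prop :=
  ∀ c d : ℝ, (∀ n : ℤ, -1 ≤ n → c * u n + d * v n = 0) → c = 0 ∧ d = 0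

/-- A nontrivial solution `u` of the recurrence is minimal if there is another solution `v`,
linearly independent from `u`, with `u n / v n → 0`. -/
def IsMinimal (p q r u : ℤ → ℝ) : Prop :=
  IsSol p q r u ∧ SeqNontrivial u ∧
    ∃ v : ℤ → ℝ, IsSol p q r v ∧ SeqLinIndep u v ∧
      Tendsto (fun n : ℕ => u (n : ℤ) / v (n : ℤ)) atTop (nhds 0)

/-!
Put `a n = g1 n / g3 n`, `b n = g2 n / g3 n`. Every solution is `w = w 0 • B + w (-1) • A`, so
`w n / B n = w 0 + w (-1) * f n → w 0 + w (-1) * μ`, and each of the three conditions turns out to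
say that this limit vanishes. Because `a > 0 > b`, the denominators alternate in sign,
`(-1) ^ n * B n > 0`, and the Casoratian `A n * B (n - 1) - A (n - 1) * B n` alternates as well;
hence the even convergents decrease and the odd ones increase strictly to `μ`, which makes
`A - μ • B` a positive solution. A nonnegative `w` forces the limit to be `≥ 0` along even and
`≤ 0` along odd indices. A comparison solution `v` has `v n / B n` convergent, so `w n / v n → 0`
forces `w n / B n → 0`; conversely `B` itself witnesses minimality when the limit vanishes.
-/

open Topology

theorem neg_one_pow_sq {R : Type*} [Monoid R] [HasDistribNeg R] (n : ℕ) :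
    ((-1 : R) ^ n) ^ 2 = 1 := by
  rw [← pow_mul', pow_mul, neg_one_sq, one_pow]

def IsCFSol (a b w : ℤ → ℝ) : Prop :=
  ∀ n : ℤ, 1 ≤ n → w n = b n * w (n - 1) + a n * w (n - 2)

theorem isSol_iff_isCFSol {p q r w : ℤ → ℝ} (hp : ∀ n : ℤ, 1 ≤ n → p n ≠ 0) :
    IsSol p q r w ↔ IsCFSol (fun n => r n / p n) (fun n => q n / p n) w := by
  refine forall₂_congr fun n hn => ?_
  rw [div_mul_eq_mul_div, div_mul_eq_mul_div, ← add_div, eq_div_iff (hp n hn), mul_comm, eq_comm]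

theorem IsCFSol.succ {a b w : ℤ → ℝ} (h : IsCFSol a b w) (n : ℕ) :
    w (n + 1) = b (n + 1) * w n + a (n + 1) * w (n - 1) := by
  have := h (n + 1) (by omega)
  rwa [add_sub_cancel_right, show (n : ℤ) + 1 - 2 = n - 1 by ring] at this

theorem IsCFSol.add_two {a b w : ℤ → ℝ} (h : IsCFSol a b w) (n : ℕ) :
    w (n + 2) = b (n + 2) * w (n + 1) + a (n + 2) * w n := by
  have := h (n + 2) (by omega)
  rwa [show (n : ℤ) + 2 - 1 = n + 1 by ring, add_sub_cancel_right] at this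

theorem forall_ge_neg_one_of_nat {P : ℤ → Prop} (h : P (-1)) (h' : ∀ n : ℕ, P n) :
    ∀ n : ℤ, -1 ≤ n → P n := by
  intro n hn
  obtain rfl | hn : n = -1 ∨ 0 ≤ n := by omega
  · exact h
  · lift n to ℕ using hn
    exact h' n

theorem SeqLinIndep.nontrivial_right {u v : ℤ → ℝ} (h : SeqLinIndep u v) : SeqNontrivial v := by
  by_contra hv
  simp only [SeqNontrivial, not_exists, not_and, not_not] at hv
  exact one_ne_zero (h 0 1 fun n hn => by simp [hv n hn]).2

structure IsCanonicalPair (a b A B : ℤ → ℝ) : Prop where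
  numer : IsCFSol a b A
  numer_neg_one : A (-1) = 1
  numer_zero : A 0 = 0
  denom : IsCFSol a b B
  denom_neg_one : B (-1) = 0
  denom_zero : B 0 = 1

namespace IsCanonicalPair

variable {a b A B w : ℤ → ℝ} {μ : ℝ}

theorem eq_mul_denom_add_mul_numer (hAB : IsCanonicalPair a b A B) (hw : IsCFSol a b w) (n : ℕ) :
    w n = w 0 * B n + w (-1) * A n := by
  suffices ∀ n : ℕ, w (n - 1) = w 0 * B (n - 1) + w (-1) * A (n - 1) ∧
      w n = w 0 * B n + w (-1) * A n from (this n).2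
  intro n
  induction n with
  | zero => simp [hAB.numer_neg_one, hAB.numer_zero, hAB.denom_neg_one, hAB.denom_zero]
  | succ n ih =>
    push_cast
    refine ⟨by simpa using ih.2, ?_⟩
    rw [hw.succ, hAB.numer.succ, hAB.denom.succ, ih.1, ih.2]
    ring

theorem neg_one_pow_mul_denom_pos (hAB : IsCanonicalPair a b A B)
    (ha : ∀ n : ℤ, 1 ≤ n → 0 < a n) (hb : ∀ n : ℤ, 1 ≤ n → b n < 0) (n : ℕ) :
    0 < (-1) ^ n * B n := by
  suffices ∀ n : ℕ, 0 ≤ (-1) ^ n * -B (n - 1) ∧ 0 < (-1) ^ n * B n from (this n).2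
  intro n
  induction n with
  | zero => simp [hAB.denom_neg_one, hAB.denom_zero]
  | succ n ih =>
    push_cast
    rw [add_sub_cancel_right, hAB.denom.succ, pow_succ]
    have hb' := hb (n + 1) (by omega)
    have ha' := ha (n + 1) (by omega)
    constructor
    · linarith [ih.2]
    · nlinarith [mul_pos (neg_pos.2 hb') ih.2, mul_nonneg ha'.le ih.1]

theorem denom_ne_zero (hAB : IsCanonicalPair a b A B)
    (ha : ∀ n : ℤ, 1 ≤ n → 0 < a n) (hb : ∀ n : ℤ, 1 ≤ n → b n < 0) (n : ℕ) : B n ≠ 0 :=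
  fun h => by simpa [h] using hAB.neg_one_pow_mul_denom_pos ha hb n

theorem neg_one_pow_mul_casoratian_neg (hAB : IsCanonicalPair a b A B)
    (ha : ∀ n : ℤ, 1 ≤ n → 0 < a n) (n : ℕ) :
    (-1) ^ n * (A n * B (n - 1) - A (n - 1) * B n) < 0 := by
  induction n with
  | zero => simp [hAB.numer_neg_one, hAB.numer_zero, hAB.denom_neg_one, hAB.denom_zero]
  | succ n ih =>
    push_cast
    rw [add_sub_cancel_right, hAB.numer.succ, hAB.denom.succ, pow_succ]
    have ha' := ha (n + 1) (by omega)
    nlinarith [mul_neg_of_pos_of_neg ha' ih]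

theorem neg_one_pow_mul_convergent_add_two_lt (hAB : IsCanonicalPair a b A B)
    (ha : ∀ n : ℤ, 1 ≤ n → 0 < a n) (hb : ∀ n : ℤ, 1 ≤ n → b n < 0) (n : ℕ) :
    (-1) ^ n * (A (n + 2) / B (n + 2)) < (-1) ^ n * (A n / B n) := by
  have hBn := hAB.neg_one_pow_mul_denom_pos ha hb n
  have hBn2 := hAB.neg_one_pow_mul_denom_pos ha hb (n + 2)
  have hD := hAB.neg_one_pow_mul_casoratian_neg ha (n + 1)
  push_cast at hBn2 hD
  rw [add_sub_cancel_right] at hD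
  rw [pow_add, neg_one_sq, mul_one] at hBn2
  have hB0 := hAB.denom_ne_zero ha hb n
  have hB2 : B (n + 2) ≠ 0 := by simpa using hAB.denom_ne_zero ha hb (n + 2)
  rw [← sub_pos]
  have key : (-1) ^ n * (A n / B n) - (-1) ^ n * (A (n + 2) / B (n + 2)) =
      b (n + 2) * ((-1) ^ (n + 1) * (A (n + 1) * B n - A n * B (n + 1))) /
        (((-1) ^ n * B n) * ((-1) ^ n * B (n + 2))) := by
    field_simp
    rw [hAB.numer.add_two, hAB.denom.add_two]
    linear_combination (-1) ^ n * b (n + 2) * (A n * B (n + 1) - B n * A (n + 1)) *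
      neg_one_pow_sq (R := ℝ) n
  rw [key]
  exact div_pos (mul_pos_of_neg_of_neg (hb _ (by omega)) hD) (mul_pos hBn hBn2)

theorem mul_denom_lt_numer (hAB : IsCanonicalPair a b A B)
    (ha : ∀ n : ℤ, 1 ≤ n → 0 < a n) (hb : ∀ n : ℤ, 1 ≤ n → b n < 0)
    (hconv : Tendsto (fun n : ℕ => A n / B n) atTop (𝓝 μ)) (n : ℕ) : μ * B n < A n := by
  set σ : ℝ := (-1) ^ n
  have hanti : StrictAnti fun k : ℕ => σ * (A ↑(n + 2 * k) / B ↑(n + 2 * k)) := by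
    refine strictAnti_nat_of_succ_lt fun k => ?_
    have := hAB.neg_one_pow_mul_convergent_add_two_lt ha hb (n + 2 * k)
    rw [pow_add, pow_mul, neg_one_sq, one_pow, mul_one] at this
    have e : ((n + 2 * (k + 1) : ℕ) : ℤ) = ((n + 2 * k : ℕ) : ℤ) + 2 := by push_cast; ring
    rwa [e]
  have hlim : Tendsto (fun k : ℕ => σ * (A ↑(n + 2 * k) / B ↑(n + 2 * k))) atTop (𝓝 (σ * μ)) :=
    (hconv.comp (show StrictMono fun k : ℕ => n + 2 * k from
      fun _ _ h => by dsimp only; omega).tendsto_atTop).const_mul σ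
  have hgap : 0 < σ * (A n / B n) - σ * μ :=
    sub_pos.2 ((hanti.antitone.le_of_tendsto hlim 1).trans_lt (by simpa using hanti zero_lt_one))
  have hB := hAB.neg_one_pow_mul_denom_pos ha hb n
  have hB0 := hAB.denom_ne_zero ha hb n
  have key : σ * B n * (σ * (A n / B n) - σ * μ) = A n - μ * B n := by
    field_simp
    linear_combination (A n - μ * B n) * neg_one_pow_sq (R := ℝ) n
  linarith [mul_pos hB hgap]

theorem tendsto_div_denom (hAB : IsCanonicalPair a b A B)
    (ha : ∀ n : ℤ, 1 ≤ n → 0 < a n) (hb : ∀ n : ℤ, 1 ≤ n → b n < 0)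
    (hconv : Tendsto (fun n : ℕ => A n / B n) atTop (𝓝 μ)) (hw : IsCFSol a b w) :
    Tendsto (fun n : ℕ => w n / B n) atTop (𝓝 (w 0 + w (-1) * μ)) := by
  refine (tendsto_const_nhds.add (hconv.const_mul _)).congr fun n => ?_
  have := hAB.denom_ne_zero ha hb n
  rw [hAB.eq_mul_denom_add_mul_numer hw n]
  field_simp

theorem eq_mul_numer_sub_mul_denom (hAB : IsCanonicalPair a b A B) (hw : IsCFSol a b w)
    (h : w 0 + w (-1) * μ = 0) (n : ℕ) : w n = w (-1) * (A n - μ * B n) := by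
  rw [hAB.eq_mul_denom_add_mul_numer hw n, show w 0 = -(w (-1) * μ) by linarith]
  ring

theorem eventually_ne_zero (hAB : IsCanonicalPair a b A B)
    (ha : ∀ n : ℤ, 1 ≤ n → 0 < a n) (hb : ∀ n : ℤ, 1 ≤ n → b n < 0)
    (hconv : Tendsto (fun n : ℕ => A n / B n) atTop (𝓝 μ)) (hw : IsCFSol a b w)
    (hw0 : SeqNontrivial w) : ∀ᶠ n : ℕ in atTop, w n ≠ 0 := by
  by_cases hL : w 0 + w (-1) * μ = 0
  · have hw1 : w (-1) ≠ 0 := by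
      intro hw1
      have hw0' : w 0 = 0 := by simpa [hw1] using hL
      obtain ⟨n, hn, hwn⟩ := hw0
      exact hwn (forall_ge_neg_one_of_nat (P := fun n => w n = 0) hw1
        (fun k => by simp [hAB.eq_mul_denom_add_mul_numer hw k, hw0', hw1]) n hn)
    refine Eventually.of_forall fun n => ?_
    rw [hAB.eq_mul_numer_sub_mul_denom hw hL n]
    exact mul_ne_zero hw1 (sub_pos.2 (hAB.mul_denom_lt_numer ha hb hconv n)).ne'
  · exact ((hAB.tendsto_div_denom ha hb hconv hw).eventually_ne hL).mono
      fun n hn => (div_ne_zero_iff.1 hn).1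

theorem nonneg_iff (hAB : IsCanonicalPair a b A B)
    (ha : ∀ n : ℤ, 1 ≤ n → 0 < a n) (hb : ∀ n : ℤ, 1 ≤ n → b n < 0)
    (hconv : Tendsto (fun n : ℕ => A n / B n) atTop (𝓝 μ)) (hw : IsCFSol a b w)
    (hw1 : 0 < w (-1)) : (∀ n : ℤ, -1 ≤ n → 0 ≤ w n) ↔ w 0 + w (-1) * μ = 0 := by
  constructor
  · intro hpos
    have hlim := hAB.tendsto_div_denom ha hb hconv hw
    have heven : 0 ≤ w 0 + w (-1) * μ :=
      ge_of_tendsto' (hlim.comp (show StrictMono fun k : ℕ => 2 * k from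
        fun _ _ h => by dsimp only; omega).tendsto_atTop)
        fun k => by
          have hB := hAB.neg_one_pow_mul_denom_pos ha hb (2 * k)
          rw [pow_mul, neg_one_sq, one_pow, one_mul] at hB
          exact div_nonneg (hpos _ (by omega)) hB.le
    have hodd : w 0 + w (-1) * μ ≤ 0 :=
      le_of_tendsto' (hlim.comp (show StrictMono fun k : ℕ => 2 * k + 1 from
        fun _ _ h => by dsimp only; omega).tendsto_atTop)
        fun k => by
          have hB := hAB.neg_one_pow_mul_denom_pos ha hb (2 * k + 1)
          rw [pow_succ, pow_mul, neg_one_sq, one_pow, one_mul, neg_one_mul, neg_pos] at hB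
          exact div_nonpos_of_nonneg_of_nonpos (hpos _ (by omega)) hB.le
    exact le_antisymm hodd heven
  · intro h
    refine forall_ge_neg_one_of_nat hw1.le fun n => ?_
    rw [hAB.eq_mul_numer_sub_mul_denom hw h n]
    exact mul_nonneg hw1.le (sub_pos.2 (hAB.mul_denom_lt_numer ha hb hconv n)).le

theorem isMinimal_iff {p q r : ℤ → ℝ} (hAB : IsCanonicalPair a b A B)
    (ha : ∀ n : ℤ, 1 ≤ n → 0 < a n) (hb : ∀ n : ℤ, 1 ≤ n → b n < 0)
    (hconv : Tendsto (fun n : ℕ => A n / B n) atTop (𝓝 μ))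
    (hsol : ∀ v, IsSol p q r v ↔ IsCFSol a b v) (hw : IsSol p q r w) (hw1 : w (-1) ≠ 0) :
    IsMinimal p q r w ↔ w 0 + w (-1) * μ = 0 := by
  have hlim := hAB.tendsto_div_denom ha hb hconv ((hsol w).1 hw)
  constructor
  · rintro ⟨-, -, v, hv, hindep, hwv⟩
    have hv' := (hsol v).1 hv
    have hvB := hAB.tendsto_div_denom ha hb hconv hv'
    -- `w / B = (w / v) * (v / B)` wherever `v ≠ 0`, and `v / B` converges
    have hwB : Tendsto (fun n : ℕ => w n / B n) atTop (𝓝 0) := by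
      rw [← zero_mul (v 0 + v (-1) * μ)]
      exact (hwv.mul hvB).congr' <| (hAB.eventually_ne_zero ha hb hconv hv'
        hindep.nontrivial_right).mono fun n hn => div_mul_div_cancel₀ hn
    exact tendsto_nhds_unique hlim hwB
  · intro h
    refine ⟨hw, ⟨-1, le_rfl, hw1⟩, B, (hsol B).2 hAB.denom, fun c d hcd => ?_, h ▸ hlim⟩
    have h1 := hcd (-1) le_rfl
    have h0 := hcd 0 (by norm_num)
    rw [hAB.denom_neg_one, mul_zero, add_zero, mul_eq_zero] at h1
    have hc : c = 0 := h1.resolve_right hw1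
    rw [hc, hAB.denom_zero] at h0
    exact ⟨hc, by simpa using h0⟩

end IsCanonicalPair

theorem stmt_3_general (α1 α0 β1 β0 γ1 γ0 μ : ℝ) (A B u : ℤ → ℝ)
    (hsig : ∀ n : ℤ, 0 ≤ n →
      0 < α1 * (n : ℝ) + α0 ∧ β1 * (n : ℝ) + β0 < 0 ∧ 0 < γ1 * (n : ℝ) + γ0)
    (hA1 : A (-1) = 1) (hA0 : A 0 = 0)
    (hArec : ∀ n : ℤ, 1 ≤ n →
      A n = (β1 * (n : ℝ) + β0) / (α1 * (n : ℝ) + α0) * A (n - 1) +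
        (γ1 * (n : ℝ) + γ0) / (α1 * (n : ℝ) + α0) * A (n - 2))
    (hB1 : B (-1) = 0) (hB0 : B 0 = 1)
    (hBrec : ∀ n : ℤ, 1 ≤ n →
      B n = (β1 * (n : ℝ) + β0) / (α1 * (n : ℝ) + α0) * B (n - 1) +
        (γ1 * (n : ℝ) + γ0) / (α1 * (n : ℝ) + α0) * B (n - 2))
    (hconv : Tendsto (fun n : ℕ => A (n : ℤ) / B (n : ℤ)) atTop (nhds μ))
    (hu : IsSol (fun n => α1 * (n : ℝ) + α0) (fun n => β1 * (n : ℝ) + β0)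
      (fun n => γ1 * (n : ℝ) + γ0) u)
    (hum1 : 0 < u (-1)) :
    ((∀ n : ℤ, -1 ≤ n → 0 ≤ u n) ↔
        IsMinimal (fun n => α1 * (n : ℝ) + α0) (fun n => β1 * (n : ℝ) + β0)
          (fun n => γ1 * (n : ℝ) + γ0) u) ∧
    (IsMinimal (fun n => α1 * (n : ℝ) + α0) (fun n => β1 * (n : ℝ) + β0)
        (fun n => γ1 * (n : ℝ) + γ0) u ↔
      -(u 0 / u (-1)) = μ) := by
  have hAB : IsCanonicalPair (fun n : ℤ => (γ1 * n + γ0) / (α1 * n + α0))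
      (fun n : ℤ => (β1 * n + β0) / (α1 * n + α0)) A B :=
    ⟨hArec, hA1, hA0, hBrec, hB1, hB0⟩
  have ha : ∀ n : ℤ, 1 ≤ n → 0 < (γ1 * n + γ0) / (α1 * n + α0) := fun n hn =>
    div_pos (hsig n (by omega)).2.2 (hsig n (by omega)).1
  have hb : ∀ n : ℤ, 1 ≤ n → (β1 * n + β0) / (α1 * n + α0) < 0 := fun n hn =>
    div_neg_of_neg_of_pos (hsig n (by omega)).2.1 (hsig n (by omega)).1
  have hsol := fun w => isSol_iff_isCFSol (q := fun n : ℤ => β1 * n + β0)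
    (r := fun n : ℤ => γ1 * n + γ0) (w := w) fun n hn => (hsig n (by omega)).1.ne'
  have hμ : -(u 0 / u (-1)) = μ ↔ u 0 + u (-1) * μ = 0 := by
    rw [neg_eq_iff_eq_neg, div_eq_iff hum1.ne']
    constructor <;> intro h <;> linarith
  rw [hAB.isMinimal_iff ha hb hconv hsol hu hum1.ne', hAB.nonneg_iff ha hb hconv ((hsol u).1 hu) hum1,
    hμ]
  exact ⟨Iff.rfl, Iff.rfl⟩

/-- For a degree-at-most-1 recurrence `g3(n) u n = g2(n) u (n-1) + g1(n) u (n-2)`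
with signature `(−,+)` (`g3 > 0`, `g2 < 0`, `g1 > 0` on `n ≥ 0`), with
`b n = g2 n / g3 n`, `a n = g1 n / g3 n`, and convergents `f n = A n / B n` of `K(a_n/b_n)`
converging to a finite limit `μ`: for any solution `u` with `u (-1) > 0` and `u 0 > 0`, the
following are equivalent: `u` is positive; `u` is a minimal solution; `-u 0 / u (-1) = μ`. -/
theorem stmt_3 (α1 α0 β1 β0 γ1 γ0 μ : ℝ) (A B u : ℤ → ℝ)
    (hsig : ∀ n : ℤ, 0 ≤ n →
      0 < α1 * (n : ℝ) + α0 ∧ β1 * (n : ℝ) + β0 < 0 ∧ 0 < γ1 * (n : ℝ) + γ0)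
    (hA1 : A (-1) = 1) (hA0 : A 0 = 0)
    (hArec : ∀ n : ℤ, 1 ≤ n →
      A n = (β1 * (n : ℝ) + β0) / (α1 * (n : ℝ) + α0) * A (n - 1) +
        (γ1 * (n : ℝ) + γ0) / (α1 * (n : ℝ) + α0) * A (n - 2))
    (hB1 : B (-1) = 0) (hB0 : B 0 = 1)
    (hBrec : ∀ n : ℤ, 1 ≤ n →
      B n = (β1 * (n : ℝ) + β0) / (α1 * (n : ℝ) + α0) * B (n - 1) +
        (γ1 * (n : ℝ) + γ0) / (α1 * (n : ℝ) + α0) * B (n - 2))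
    (hconv : Tendsto (fun n : ℕ => A (n : ℤ) / B (n : ℤ)) atTop (nhds μ))
    (hu : IsSol (fun n => α1 * (n : ℝ) + α0) (fun n => β1 * (n : ℝ) + β0)
      (fun n => γ1 * (n : ℝ) + γ0) u)
    (hum1 : 0 < u (-1)) (hu0 : 0 < u 0) :
    ((∀ n : ℤ, -1 ≤ n → 0 ≤ u n) ↔
        IsMinimal (fun n => α1 * (n : ℝ) + α0) (fun n => β1 * (n : ℝ) + β0)
          (fun n => γ1 * (n : ℝ) + γ0) u) ∧
    (IsMinimal (fun n => α1 * (n : ℝ) + α0) (fun n => β1 * (n : ℝ) + β0)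
        (fun n => γ1 * (n : ℝ) + γ0) u ↔
      -(u 0 / u (-1)) = μ) :=
  stmt_3_general α1 α0 β1 β0 γ1 γ0 μ A B u hsig hA1 hA0 hArec hB1 hB0 hBrec hconv hu hum1
end

section
/- Let g3(n)=α1 n+α0, g2(n)=β1 n+β0, g1(n)=γ1 n+γ0 be real polynomials of degree at most 1 with g3(n) > 0, g2(n) > 0 and g1(n) < 0 for all integers n ≥ 0 (signature (+,−)), and suppose g2(n)² + 4 g3(n) g1(n) < 0 for every integer n ≥ 0. Then the recurrence g3(n)u_n = g2(n)u_{n-1} + g1(n)u_{n-2} (n ≥ 1) has no nontrivial solution (u_n)_{n≥-1} with u_n ≥ 0 for all n ≥ −1. -/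
/-!
Positivity propagates along the recurrence (`g2 > 0 > g1`), so a nontrivial nonnegative solution
is eventually positive and the ratios `ρ n = u n / u (n - 1)` are defined. Writing
`Δ = -(g2² + 4 g3 g1) > 0`, the identity
`4 g3² (u (n-1)² - u n u (n-2)) = (2 g3 u (n-1) - g2 u (n-2))² + Δ u (n-2)²`
gives `ρ (n-1)² - ρ n² ≥ Δ(n) / (4 g3(n)²)`. As `Δ` is a quadratic and `g3` is affine, both
positive on `ℕ`, this lower bound is at least `κ / n` for some `κ > 0`, so the nonnegative sequence
`ρ n²` would have to decrease by the terms of a divergent harmonic series.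
-/

open Filter

theorem false_of_eventually_harmonic_decrease {t : ℤ → ℝ} {c : ℝ} (hc : 0 < c)
    (ht : ∀ᶠ n in atTop, 0 ≤ t n) (hstep : ∀ᶠ n in atTop, c / n ≤ t (n - 1) - t n) : False := by
  obtain ⟨N, hN⟩ := eventually_atTop.1 (ht.and hstep)
  set M := N.toNat
  let f : ℕ → ℝ := fun k => t (M + k)
  have hstep' (k : ℕ) : c * ((k + (M + 1) : ℕ) : ℝ)⁻¹ ≤ f k - f (k + 1) := by
    have h := (hN (M + k + 1) (by omega)).2
    rw [add_sub_cancel_right, div_eq_mul_inv] at h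
    simp only [f, Nat.cast_succ, ← add_assoc]
    convert h using 2
    push_cast; ring
  have hf : Summable fun k => f k - f (k + 1) := by
    refine summable_of_sum_range_le (c := f 0)
      (fun k => (by positivity : (0 : ℝ) ≤ _).trans (hstep' k)) fun K => ?_
    rw [Finset.sum_range_sub']
    linarith [(hN (M + K) (by omega)).1]
  have hharm := hf.of_nonneg_of_le (fun k => by positivity) hstep'
  exact Real.not_summable_natCast_inv
    ((summable_mul_left_iff hc.ne').1 ((summable_nat_add_iff (M + 1)).1 hharm))

theorem four_mul_sq_mul_sub_of_mul_eq {R : Type*} [CommRing R] {p q r x y z : R}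
    (h : p * z = q * y + r * x) :
    4 * p ^ 2 * (y ^ 2 - z * x) = (2 * p * y - q * x) ^ 2 - (q ^ 2 + 4 * p * r) * x ^ 2 := by
  linear_combination (-4 * p * x) * h

theorem neg_disc_div_le_sq_div_sub_sq_div {p q r x y z : ℝ} (hp : p ≠ 0) (hx : 0 < x) (hy : 0 < y)
    (hz : 0 ≤ z) (hdisc : q ^ 2 + 4 * p * r ≤ 0) (h : p * z = q * y + r * x) :
    -(q ^ 2 + 4 * p * r) / (4 * p ^ 2) ≤ (y / x) ^ 2 - (z / y) ^ 2 := by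
  have hprod : -(q ^ 2 + 4 * p * r) / (4 * p ^ 2) ≤ y / x * (y / x - z / y) := by
    rw [show y / x * (y / x - z / y) = (y ^ 2 - z * x) / x ^ 2 by field_simp,
      div_le_div_iff₀ (by positivity) (by positivity)]
    nlinarith [four_mul_sq_mul_sub_of_mul_eq h, sq_nonneg (2 * p * y - q * x)]
  have hle : z / y ≤ y / x := by
    have : 0 ≤ y / x * (y / x - z / y) := (div_nonneg (by linarith) (by positivity)).trans hprod
    linarith [nonneg_of_mul_nonneg_right this (by positivity)]
  nlinarith [mul_nonneg (div_nonneg hz hy.le) (sub_nonneg.2 hle)]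

theorem pos_of_mul_eq_add {p q r x y z : ℝ} (hq : 0 < q) (hr : r < 0) (hx : 0 < x)
    (hpz : 0 ≤ p * z) (h : p * z = q * y + r * x) : 0 < y :=
  pos_of_mul_pos_right (by nlinarith [mul_neg_of_neg_of_pos hr hx]) hq.le

theorem pos_of_recurrence {a b c u : ℤ → ℝ} {m : ℤ} (hm : -1 ≤ m)
    (hb : ∀ n ≥ 1, 0 < b n) (hc : ∀ n ≥ 1, c n < 0) (hau : ∀ n ≥ 1, 0 ≤ a n * u n)
    (hrec : ∀ n ≥ 1, a n * u n = b n * u (n - 1) + c n * u (n - 2)) (hum : 0 < u m) :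
    ∀ n ≥ m, 0 < u n := by
  refine Int.leInduction hum fun k hk huk => ?_
  have h := hrec (k + 2) (by omega)
  rw [show k + 2 - 1 = k + 1 by ring, show k + 2 - 2 = k by ring] at h
  exact pos_of_mul_eq_add (hb _ (by omega)) (hc _ (by omega)) huk (hau _ (by omega)) h

theorem nonneg_of_forall_pos_affine {a b : ℝ} (h : ∀ n : ℤ, 0 ≤ n → 0 < a * n + b) : 0 ≤ a := by
  by_contra! ha
  obtain ⟨n, hn⟩ := exists_nat_gt (b / -a)
  rw [div_lt_iff₀ (neg_pos.2 ha)] at hn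
  have := h n (by positivity)
  push_cast at this
  linarith

theorem nonneg_of_forall_pos_quadratic {a b c : ℝ}
    (h : ∀ n : ℤ, 0 ≤ n → 0 < a * n ^ 2 + b * n + c) : 0 ≤ a := by
  by_contra! ha
  obtain ⟨n, hn⟩ := exists_nat_gt ((|b| + |c|) / -a + 1)
  have hn1 : (1 : ℝ) ≤ n := by
    have : 0 ≤ (|b| + |c|) / -a := div_nonneg (by positivity) (neg_pos.2 ha).le
    linarith
  have hn' : |b| + |c| < -a * n := by
    rw [← div_lt_iff₀' (neg_pos.2 ha)]; linarith
  have := h n (by positivity)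
  push_cast at this
  nlinarith [le_abs_self c, mul_le_mul_of_nonneg_right (le_abs_self b) (by linarith : (0 : ℝ) ≤ n),
    mul_le_mul_of_nonneg_left hn1 (abs_nonneg c)]

theorem exists_eventually_mul_le_quadratic {a b c : ℝ}
    (h : ∀ n : ℤ, 0 ≤ n → 0 < a * n ^ 2 + b * n + c) (hab : a ≠ 0 ∨ b ≠ 0) :
    ∃ κ > 0, ∀ᶠ n : ℤ in atTop, κ * n ≤ a * n ^ 2 + b * n + c := by
  have hc : 0 < c := by simpa using h 0 le_rfl
  rcases (nonneg_of_forall_pos_quadratic h).lt_or_eq with ha | rfl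
  · refine ⟨a, ha, ?_⟩
    obtain ⟨N, hN⟩ := exists_nat_gt ((a + |b|) / a)
    rw [div_lt_iff₀ ha] at hN
    filter_upwards [eventually_ge_atTop (N : ℤ)] with n hn
    have hn' : (N : ℝ) ≤ n := by exact_mod_cast hn
    have hn0 : (0 : ℝ) ≤ n := (Nat.cast_nonneg N).trans hn'
    nlinarith [mul_le_mul_of_nonneg_right (neg_abs_le b) hn0,
      mul_nonneg hn0 (by nlinarith : 0 ≤ a * n - |b| - a)]
  · have hb : 0 ≤ b := nonneg_of_forall_pos_affine fun n hn => by simpa using h n hn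
    refine ⟨b, hb.lt_of_ne' (hab.resolve_left (by simp)), ?_⟩
    filter_upwards with n
    linarith

theorem exists_eventually_div_le_neg_disc {α1 α0 β1 β0 γ1 γ0 : ℝ}
    (ha : ∀ n : ℤ, 0 ≤ n → 0 < α1 * n + α0)
    (hdisc : ∀ n : ℤ, 0 ≤ n → (β1 * n + β0) ^ 2 + 4 * (α1 * n + α0) * (γ1 * n + γ0) < 0) :
    ∃ κ > 0, ∀ᶠ n : ℤ in atTop,
      κ / n ≤
        -((β1 * n + β0) ^ 2 + 4 * (α1 * n + α0) * (γ1 * n + γ0)) / (4 * (α1 * n + α0) ^ 2) := by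
  have hα0 : 0 < α0 := by simpa using ha 0 le_rfl
  have hα1 : 0 ≤ α1 := nonneg_of_forall_pos_affine ha
  set c₂ := -(β1 ^ 2 + 4 * α1 * γ1)
  set c₁ := -(2 * β1 * β0 + 4 * α1 * γ0 + 4 * α0 * γ1)
  set c₀ := -(β0 ^ 2 + 4 * α0 * γ0)
  have hD (x : ℝ) : -((β1 * x + β0) ^ 2 + 4 * (α1 * x + α0) * (γ1 * x + γ0)) =
      c₂ * x ^ 2 + c₁ * x + c₀ := by ring
  have hDpos (n : ℤ) (hn : 0 ≤ n) : 0 < c₂ * n ^ 2 + c₁ * n + c₀ := by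
    rw [← hD]; linarith [hdisc n hn]
  have hc₀ : 0 < c₀ := by simpa using hDpos 0 le_rfl
  simp_rw [hD]
  by_cases hnc : c₂ ≠ 0 ∨ c₁ ≠ 0
  · obtain ⟨κ, hκ, hev⟩ := exists_eventually_mul_le_quadratic hDpos hnc
    refine ⟨κ / (4 * (α1 + α0) ^ 2), by positivity, ?_⟩
    filter_upwards [hev, eventually_ge_atTop 1] with n hn hn1
    have hn1' : (1 : ℝ) ≤ n := by exact_mod_cast hn1
    have han := ha n (by omega)
    calc κ / (4 * (α1 + α0) ^ 2) / n = κ * n / (4 * ((α1 + α0) * n) ^ 2) := by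
          field_simp
      _ ≤ (c₂ * n ^ 2 + c₁ * n + c₀) / (4 * (α1 * n + α0) ^ 2) := by
          gcongr
          · exact (hDpos n (by omega)).le
          · nlinarith [mul_le_mul_of_nonneg_left hn1' hα0.le]
  · push Not at hnc
    -- otherwise `g3` vanishes at `-α0 / α1`, where `Δ = -g2² ≤ 0` contradicts `Δ = c₀ > 0`
    have hα1 : α1 = 0 := by
      by_contra hα1
      have h := hD (-α0 / α1)
      rw [hnc.1, hnc.2, show α1 * (-α0 / α1) + α0 = 0 by field_simp; ring] at h
      nlinarith [sq_nonneg (β1 * (-α0 / α1) + β0)]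
    refine ⟨c₀ / (4 * α0 ^ 2), by positivity, ?_⟩
    filter_upwards [eventually_ge_atTop 1] with n hn1
    simp only [hnc, hα1, zero_mul, zero_add, add_zero]
    exact div_le_self (by positivity) (by exact_mod_cast hn1)

/-- A degree-at-most-1 recurrence `g3(n) u n = g2(n) u (n-1) + g1(n) u (n-2)`
with signature `(+,−)` (`g3 > 0`, `g2 > 0`, `g1 < 0` on `n ≥ 0`) and everywhere negative
discriminant `g2(n)² + 4 g3(n) g1(n) < 0` has no nontrivial nonnegative solution. -/
theorem stmt_4 (α1 α0 β1 β0 γ1 γ0 : ℝ) (u : ℤ → ℝ)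
    (hsig : ∀ n : ℤ, 0 ≤ n →
      0 < α1 * (n : ℝ) + α0 ∧ 0 < β1 * (n : ℝ) + β0 ∧ γ1 * (n : ℝ) + γ0 < 0)
    (hdisc : ∀ n : ℤ, 0 ≤ n →
      (β1 * (n : ℝ) + β0) ^ 2 + 4 * (α1 * (n : ℝ) + α0) * (γ1 * (n : ℝ) + γ0) < 0)
    (hu : ∀ n : ℤ, 1 ≤ n →
      (α1 * (n : ℝ) + α0) * u n =
        (β1 * (n : ℝ) + β0) * u (n - 1) + (γ1 * (n : ℝ) + γ0) * u (n - 2))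
    (hnt : ∃ n : ℤ, -1 ≤ n ∧ u n ≠ 0) :
    ¬ (∀ n : ℤ, -1 ≤ n → 0 ≤ u n) := by
  intro hnonneg
  obtain ⟨m, hm, hum⟩ := hnt
  have hpos : ∀ n ≥ m, 0 < u n :=
    pos_of_recurrence (a := fun n : ℤ => α1 * (n : ℝ) + α0) hm
      (fun n hn => (hsig n (by omega)).2.1) (fun n hn => (hsig n (by omega)).2.2)
      (fun n hn => mul_nonneg (hsig n (by omega)).1.le (hnonneg n (by omega))) hu
      ((hnonneg m hm).lt_of_ne' hum)
  obtain ⟨κ, hκ, hκD⟩ := exists_eventually_div_le_neg_disc (fun n hn => (hsig n hn).1) hdisc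
  refine false_of_eventually_harmonic_decrease (t := fun n => (u n / u (n - 1)) ^ 2) hκ
    (Eventually.of_forall fun n => sq_nonneg _) ?_
  filter_upwards [hκD, eventually_ge_atTop (m + 2)] with n hn hnm
  rw [show n - 1 - 1 = n - 2 by ring]
  exact hn.trans (neg_disc_div_le_sq_div_sub_sq_div (hsig n (by omega)).1.ne'
    (hpos (n - 2) (by omega)) (hpos (n - 1) (by omega)) (hpos n (by omega)).le
    (hdisc n (by omega)).le (hu n (by omega)))
end

section
/- Let α, γ be real numbers with γ > −1 and α > γ + 1. Then the series ∑_{k=0}^{∞} (γ+1)_k / (α+1)_k converges and equals α/(α − γ − 1), where (x)_k = x(x+1)⋯(x+k−1) denotes the rising factorial (Pochhammer symbol) with (x)_0 = 1. -/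
/-- For real `γ > -1` and `α > γ + 1`, the series
`∑_{k=0}^∞ (γ+1)_k / (α+1)_k` (rising factorials) converges, with sum `α / (α − γ − 1)`. -/
theorem stmt_10 (α γ : ℝ) (hγ : -1 < γ) (hα : γ + 1 < α) :
    HasSum
      (fun k : ℕ =>
        (∏ j ∈ Finset.range k, (γ + 1 + (j : ℝ))) /
          (∏ j ∈ Finset.range k, (α + 1 + (j : ℝ))))
      (α / (α - γ - 1)) := by
  have hδ : (0:ℝ) < α - γ - 1 := by linarith
  have hα0 : (0:ℝ) < α := by linarith
  set t : ℕ → ℝ := fun k =>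
      (∏ j ∈ Finset.range k, (γ + 1 + (j : ℝ))) /
        (∏ j ∈ Finset.range k, (α + 1 + (j : ℝ))) with ht
  have hγj : ∀ j : ℕ, (0:ℝ) < γ + 1 + j := fun j => by
    have := (Nat.cast_nonneg j : (0:ℝ) ≤ j); linarith
  have hαj : ∀ j : ℕ, (0:ℝ) < α + 1 + j := fun j => by
    have := (Nat.cast_nonneg j : (0:ℝ) ≤ j); linarith
  have htpos : ∀ k, 0 < t k := fun k => by
    apply div_pos <;> exact Finset.prod_pos (fun j _ => by first | exact hγj j | exact hαj j)
  have htsucc : ∀ k : ℕ, t (k + 1) = t k * ((γ + 1 + k) / (α + 1 + k)) := by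
    intro k
    simp only [ht, Finset.prod_range_succ]
    rw [div_mul_div_comm]
  set b : ℕ → ℝ := fun n => (α + n) * t n / (α - γ - 1) with hb
  have htele : ∀ n : ℕ, t n = b n - b (n + 1) := by
    intro n
    simp only [hb]
    rw [htsucc n]
    have h1 : (α + 1 + (n:ℝ)) ≠ 0 := (hαj n).ne'
    have h2 : (α - γ - 1) ≠ 0 := hδ.ne'
    push_cast
    field_simp
    ring
  have hpart : ∀ n : ℕ, ∑ k ∈ Finset.range n, t k = b 0 - b n := by
    intro n
    rw [Finset.sum_congr rfl (fun k _ => htele k)]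
    exact Finset.sum_range_sub' b n
  have hb0 : b 0 = α / (α - γ - 1) := by simp [hb, ht]
  have hbpos : ∀ n, 0 < b n := fun n =>
    div_pos (mul_pos (by have := (Nat.cast_nonneg n : (0:ℝ) ≤ n); linarith) (htpos n)) hδ
  have hsummable : Summable t := by
    apply summable_of_sum_range_le (c := b 0) (fun n => (htpos n).le)
    intro n
    rw [hpart n]
    linarith [hbpos n]
  have hS := hsummable.hasSum
  set S : ℝ := ∑' k, t k with hSdef
  have hbL : Filter.Tendsto b Filter.atTop (nhds (b 0 - S)) := by
    have h1 : Filter.Tendsto (fun n => ∑ k ∈ Finset.range n, t k) Filter.atTop (nhds S) :=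
      hS.tendsto_sum_nat
    have h2 := (tendsto_const_nhds (x := b 0)).sub h1
    refine h2.congr (fun n => ?_)
    rw [hpart n]; ring
  have hbanti : ∀ n m, n ≤ m → b m ≤ b n := by
    intro n m hnm
    induction m with
    | zero => simp [Nat.le_zero.mp hnm]
    | succ m ih =>
      rcases Nat.lt_or_ge n (m+1) with h | h
      · have h3 := ih (Nat.lt_succ_iff.mp h)
        have h4 := htele m
        have h5 := (htpos m).le
        linarith
      · have : n = m + 1 := le_antisymm hnm h
        simp [this]
  have hLb : ∀ n, b 0 - S ≤ b n := by
    intro n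
    refine le_of_tendsto hbL ?_
    filter_upwards [Filter.eventually_ge_atTop n] with m hm
    exact hbanti n m hm
  have hL0 : 0 ≤ b 0 - S := ge_of_tendsto' hbL (fun n => (hbpos n).le)
  have hL : b 0 - S = 0 := by
    by_contra hne
    have hLpos : 0 < b 0 - S := lt_of_le_of_ne hL0 (Ne.symm hne)
    set L : ℝ := b 0 - S with hLdef
    have hcpos : 0 < (α - γ - 1) * L / (α + 1) :=
      div_pos (mul_pos hδ hLpos) (by linarith)
    have hkey : ∀ n : ℕ, ((α - γ - 1) * L / (α + 1)) * ((n:ℝ) + 1)⁻¹ ≤ t n := by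
      intro n
      have hn0 : (0:ℝ) ≤ n := Nat.cast_nonneg n
      have hαn : (0:ℝ) < α + n := by linarith
      have htn : (α - γ - 1) * b n / (α + n) = t n := by
        simp only [hb]
        field_simp
      have h1 : (α - γ - 1) * L / (α + n) ≤ t n := by
        rw [← htn]
        gcongr
        exact hLb n
      refine le_trans ?_ h1
      rw [← div_eq_mul_inv, div_div]
      gcongr
      all_goals nlinarith [mul_pos hδ hLpos]
    have hsum2 : Summable (fun n : ℕ => ((α - γ - 1) * L / (α + 1)) * ((n:ℝ) + 1)⁻¹) :=
      Summable.of_nonneg_of_le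
        (fun n => mul_nonneg hcpos.le (by positivity)) hkey hsummable
    have hsum3 : Summable (fun n : ℕ => ((n:ℝ) + 1)⁻¹) := by
      have h4 := hsum2.mul_left ((α - γ - 1) * L / (α + 1))⁻¹
      refine h4.congr (fun n => ?_)
      field_simp
    have : Summable (fun n : ℕ => ((n:ℝ))⁻¹) := by
      rw [← summable_nat_add_iff 1]
      exact hsum3.congr (fun n => by push_cast; ring)
    exact Real.not_summable_natCast_inv this
  have hSval : S = α / (α - γ - 1) := by rw [← hb0]; linarith
  rw [← hSval]
  exact hS
end

section
/- Let (q_m)_{m≥1} be a real sequence with q_m ≠ 0 for every m ≥ 1, and consider the recurrence u_n = (1+q_n) u_{n-1} − q_n u_{n-2} (n ≥ 1) for sequences (u_n)_{n≥-1}. Then: (1) the constant sequence with all terms 1 is a solution; (2) the sequence (v_n)_{n≥-1} with v_{-1} = 0 and v_n = ∑_{k=0}^{n} ∏_{m=1}^{k} q_m for n ≥ 0 is a solution, and it is linearly independent from the constant solution; (3) if the series ξ = ∑_{k=0}^{∞} ∏_{m=1}^{k} q_m converges to a real number, then the sequence (w_n)_{n≥-1} with w_n = v_n − ξ is a nontrivial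 minimal solution of the recurrence. -/
open Filter

lemma Icc_int_insert {a b : ℤ} (h : a ≤ b) :
    Finset.Icc a b = insert b (Finset.Icc a (b - 1)) := by
  ext x
  simp only [Finset.mem_Icc, Finset.mem_insert]
  omega

lemma notmem_Icc_int (a b : ℤ) : b ∉ Finset.Icc a (b - 1) := by
  simp only [Finset.mem_Icc]
  omega

/-- For the recurrence `u n = (1 + q n) u (n-1) − q n * u (n-2)` (`n ≥ 1`,
all `q m ≠ 0` for `m ≥ 1`): (1) the constant sequence `1` is a solution; (2) the sequence `v`
with `v (-1) = 0` and `v n = ∑_{k=0}^n ∏_{m=1}^k q m` for `n ≥ 0` is a solution, linearly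
independent from the constant solution; (3) if `ξ = ∑_{k=0}^∞ ∏_{m=1}^k q m` converges, then
`w n = v n − ξ` is a nontrivial minimal solution. -/
theorem stmt_11 (q : ℤ → ℝ) (hq : ∀ m : ℤ, 1 ≤ m → q m ≠ 0) (v : ℤ → ℝ)
    (hv1 : v (-1) = 0)
    (hv : ∀ n : ℤ, 0 ≤ n →
      v n = ∑ k ∈ Finset.Icc (0 : ℤ) n, ∏ m ∈ Finset.Icc (1 : ℤ) k, q m) :
    IsSol (fun _ => 1) (fun n => 1 + q n) (fun n => -q n) (fun _ => 1) ∧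
    (IsSol (fun _ => 1) (fun n => 1 + q n) (fun n => -q n) v ∧
      SeqLinIndep (fun _ => (1 : ℝ)) v) ∧
    (∀ ξ : ℝ,
      Tendsto
        (fun N : ℕ => ∑ k ∈ Finset.range N, ∏ m ∈ Finset.Icc (1 : ℤ) (k : ℤ), q m)
        atTop (nhds ξ) →
      IsMinimal (fun _ => 1) (fun n => 1 + q n) (fun n => -q n) (fun n => v n - ξ)) := by
  have hv0 : v 0 = 1 := by
    rw [hv 0 le_rfl, Finset.Icc_self, Finset.sum_singleton,
      Finset.Icc_eq_empty (by norm_num), Finset.prod_empty]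
  have hd : ∀ n : ℤ, 0 ≤ n → v n = v (n - 1) + ∏ m ∈ Finset.Icc (1 : ℤ) n, q m := by
    intro n hn
    rcases eq_or_lt_of_le hn with h | h
    · subst h
      simp [show (0:ℤ) - 1 = -1 by norm_num, hv0, hv1,
        Finset.Icc_eq_empty (show ¬ (1:ℤ) ≤ 0 by norm_num)]
    · have e1 := hv n hn
      have e2 := hv (n - 1) (by omega)
      rw [e1, e2, Icc_int_insert hn, Finset.sum_insert (notmem_Icc_int 0 n)]
      ring
  have hsol1 : IsSol (fun _ => 1) (fun n => 1 + q n) (fun n => -q n) (fun _ => 1) := by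
    intro n hn; simp
  have hsolv : IsSol (fun _ => 1) (fun n => 1 + q n) (fun n => -q n) v := by
    intro n hn
    have h1 := hd n (by omega)
    have h2 := hd (n - 1) (by omega)
    have e : (n : ℤ) - 1 - 1 = n - 2 := by ring
    rw [e] at h2
    have hp : ∏ m ∈ Finset.Icc (1 : ℤ) n, q m
        = (∏ m ∈ Finset.Icc (1 : ℤ) (n - 1), q m) * q n := by
      rw [Icc_int_insert hn, Finset.prod_insert (notmem_Icc_int 1 n)]
      ring
    simp only
    linear_combination h1 - q n * h2 + hp
  have hvn : ∀ n : ℕ, v (n : ℤ)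
      = ∑ k ∈ Finset.range (n + 1), ∏ m ∈ Finset.Icc (1 : ℤ) (k : ℤ), q m := by
    intro n
    induction n with
    | zero => simpa [Finset.Icc_eq_empty (show ¬ (1:ℤ) ≤ 0 by norm_num)] using hv0
    | succ n ih =>
      have h := hd ((n : ℤ) + 1) (by positivity)
      have e : ((n : ℤ) + 1) - 1 = (n : ℤ) := by ring
      rw [e] at h
      rw [Finset.sum_range_succ, ← ih]
      push_cast
      exact h
  refine ⟨hsol1, ⟨hsolv, ?_⟩, ?_⟩
  · intro c d h
    have h0 := h (-1) le_rfl
    have h1 := h 0 (by norm_num)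
    simp only [hv1, hv0, mul_zero, mul_one, add_zero] at h0 h1
    exact ⟨h0, by linarith⟩
  · intro ξ hξ
    have hlim : Tendsto (fun n : ℕ => v (n : ℤ)) atTop (nhds ξ) := by
      have := hξ.comp (tendsto_add_atTop_nat 1)
      convert this using 2 with n
      exact hvn n
    refine ⟨?_, ?_, (fun _ => 1), hsol1, ?_, ?_⟩
    · intro n hn
      have := hsolv n hn
      simp only at this ⊢
      linear_combination this
    · by_cases hξ0 : ξ = 0
      · exact ⟨0, by norm_num, by simp [hv0, hξ0]⟩
      · exact ⟨-1, le_rfl, by simp [hv1, hξ0]⟩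
    · intro c d h
      have h0 := h (-1) le_rfl
      have h1 := h 0 (by norm_num)
      simp only [hv1, hv0, mul_one] at h0 h1
      have hc : c = 0 := by linear_combination h1 - h0
      exact ⟨hc, by linear_combination h0 + ξ * hc⟩
    · simp only [div_one]
      have := hlim.sub_const ξ
      simpa using this
end

section
/- Let g3(n)=α1 n+α0, g2(n)=β1 n+β0, g1(n)=γ1 n+γ0 be real polynomials of degree at most 1 with g3(n) > 0, g2(n) > 0 and g1(n) < 0 for all integers n ≥ 0, and with g2(n)² + 4 g3(n) g1(n) ≥ 0 for all n ≥ 1. For n ≥ 1 let λ_n = (g2(n) − √(g2(n)² + 4 g3(n) g1(n)))/(2 g3(n)) be the smaller root of the n-th characteristic polynomial χ_n(x) = g3(n)x² − g2(n)x − g1(n), and suppose the sequence (λ_n)_{n≥1} is decreasing (λ_{n+1} ≤ λ_n for all n ≥ 1). If (u_n)_{n≥-1} is a solution of g3(n)u_n = g2(n)u_{n-1} + g1(n)u_{n-2} (n ≥ 1) and there is k ≥ 1 with u_{-1} > 0, u_0 > 0, …, u_k > 0 and u_k/u_{k-1} ≥ λ_k, then u_n > 0 for every n ≥ −1. -/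
/-!
Because `λ_{n+1}` is a root of `χ_{n+1}`, the recurrence gives
`g3(n+1) λ_{n+1} (u_{n+1} − λ_{n+1} u_n) = −g1(n+1) (u_n − λ_{n+1} u_{n−1})`, where both
`g3(n+1) λ_{n+1}` and `−g1(n+1)` are positive. So the invariant `u_{n−1} > 0`, `u_n ≥ λ_n u_{n−1}`
passes from `n` to `n + 1`: as `λ` decreases, `u_n ≥ λ_n u_{n−1} ≥ λ_{n+1} u_{n−1}`, hence
`u_{n+1} ≥ λ_{n+1} u_n > 0`.
-/

/-- The smaller root `λ_n` of the `n`-th characteristic polynomial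
`χ_n(x) = g3(n) x² − g2(n) x − g1(n)`, for `g3(n) = α1 n + α0`, `g2(n) = β1 n + β0`,
`g1(n) = γ1 n + γ0`. -/
noncomputable def charRootLo (α1 α0 β1 β0 γ1 γ0 : ℝ) (n : ℤ) : ℝ :=
  ((β1 * (n : ℝ) + β0) -
      Real.sqrt ((β1 * (n : ℝ) + β0) ^ 2 +
        4 * (α1 * (n : ℝ) + α0) * (γ1 * (n : ℝ) + γ0))) /
    (2 * (α1 * (n : ℝ) + α0))

lemma smaller_root_pos {a b c : ℝ} (ha : 0 < a) (hb : 0 < b) (hc : c < 0) :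
    0 < (b - √(b ^ 2 + 4 * a * c)) / (2 * a) := by
  have hsqrt : √(b ^ 2 + 4 * a * c) < b := (Real.sqrt_lt' hb).mpr (by nlinarith)
  exact div_pos (by linarith) (by positivity)

lemma smaller_root_isRoot {a b c : ℝ} (ha : a ≠ 0) (hdisc : 0 ≤ b ^ 2 + 4 * a * c) :
    a * ((b - √(b ^ 2 + 4 * a * c)) / (2 * a)) ^ 2 =
      b * ((b - √(b ^ 2 + 4 * a * c)) / (2 * a)) + c := by
  have hsq := Real.sq_sqrt hdisc
  generalize √(b ^ 2 + 4 * a * c) = s at hsq ⊢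
  field_simp
  linear_combination hsq

lemma root_mul_le_of_recurrence {a b c r x y z : ℝ} (ha : 0 < a) (hc : c < 0) (hr : 0 < r)
    (hroot : a * r ^ 2 = b * r + c) (hrec : a * z = b * y + c * x) (hxy : r * x ≤ y) :
    r * y ≤ z := by
  have key : a * r * (z - r * y) = -c * (y - r * x) := by
    linear_combination r * hrec - y * hroot
  have hprod : 0 ≤ a * r * (z - r * y) := key ▸ mul_nonneg (by linarith) (by linarith)
  linarith [nonneg_of_mul_nonneg_right hprod (by positivity)]

theorem recurrence_pos_of_root_mul_le {g3 g2 g1 lam u : ℤ → ℝ} {k : ℤ}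
    (hg3 : ∀ n, k < n → 0 < g3 n) (hg1 : ∀ n, k < n → g1 n < 0)
    (hlam : ∀ n, k ≤ n → 0 < lam n)
    (hroot : ∀ n, k < n → g3 n * lam n ^ 2 = g2 n * lam n + g1 n)
    (hanti : ∀ n, k ≤ n → lam (n + 1) ≤ lam n)
    (hrec : ∀ n, k < n → g3 n * u n = g2 n * u (n - 1) + g1 n * u (n - 2))
    (hu : 0 < u (k - 1)) (hratio : lam k * u (k - 1) ≤ u k) :
    ∀ n, k ≤ n → 0 < u n := by
  have invariant : ∀ n, k ≤ n → 0 < u (n - 1) ∧ lam n * u (n - 1) ≤ u n := by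
    intro n hn
    induction n, hn using Int.leInduction with
    | base => exact ⟨hu, hratio⟩
    | succ m hm ih =>
      obtain ⟨hprev, hle⟩ := ih
      have hm' : k < m + 1 := by omega
      have hrec' := hrec (m + 1) hm'
      rw [show m + 1 - 1 = m by ring, show m + 1 - 2 = m - 1 by ring] at hrec'
      have hstep : lam (m + 1) * u (m - 1) ≤ u m :=
        (mul_le_mul_of_nonneg_right (hanti m hm) hprev.le).trans hle
      refine ⟨by simpa using (mul_pos (hlam m hm) hprev).trans_le hle, ?_⟩
      simpa using root_mul_le_of_recurrence (hg3 _ hm') (hg1 _ hm') (hlam _ hm'.le)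
        (hroot _ hm') hrec' hstep
  intro n hn
  obtain ⟨hprev, hle⟩ := invariant n hn
  exact (mul_pos (hlam n hn) hprev).trans_le hle

/-- Signature `(+,−)`, nonnegative discriminants, `(λ_n)` decreasing:
if a solution `u` satisfies `u (-1), …, u k > 0` and `u k / u (k-1) ≥ λ_k` for some `k ≥ 1`,
then `u n > 0` for every `n ≥ −1`. -/
theorem stmt_14 (α1 α0 β1 β0 γ1 γ0 : ℝ) (u : ℤ → ℝ) (k : ℤ)
    (hsig : ∀ n : ℤ, 0 ≤ n →
      0 < α1 * (n : ℝ) + α0 ∧ 0 < β1 * (n : ℝ) + β0 ∧ γ1 * (n : ℝ) + γ0 < 0)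
    (hdisc : ∀ n : ℤ, 1 ≤ n →
      0 ≤ (β1 * (n : ℝ) + β0) ^ 2 + 4 * (α1 * (n : ℝ) + α0) * (γ1 * (n : ℝ) + γ0))
    (hdec : ∀ n : ℤ, 1 ≤ n →
      charRootLo α1 α0 β1 β0 γ1 γ0 (n + 1) ≤ charRootLo α1 α0 β1 β0 γ1 γ0 n)
    (hu : ∀ n : ℤ, 1 ≤ n →
      (α1 * (n : ℝ) + α0) * u n =
        (β1 * (n : ℝ) + β0) * u (n - 1) + (γ1 * (n : ℝ) + γ0) * u (n - 2))
    (hk : 1 ≤ k)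
    (hupos : ∀ n : ℤ, -1 ≤ n → n ≤ k → 0 < u n)
    (hratio : charRootLo α1 α0 β1 β0 γ1 γ0 k ≤ u k / u (k - 1)) :
    ∀ n : ℤ, -1 ≤ n → 0 < u n := by
  have hukm1 : 0 < u (k - 1) := hupos (k - 1) (by omega) (by omega)
  have hpos : ∀ n, k ≤ n → 0 < u n := by
    refine recurrence_pos_of_root_mul_le (g3 := fun n : ℤ => α1 * n + α0)
      (g2 := fun n : ℤ => β1 * n + β0) (g1 := fun n : ℤ => γ1 * n + γ0)
      (fun n hn => (hsig n (by omega)).1)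
      (fun n hn => (hsig n (by omega)).2.2) (fun n hn => ?_) (fun n hn => ?_)
      (fun n hn => hdec n (by omega)) (fun n hn => hu n (by omega)) hukm1
      ((le_div_iff₀ hukm1).mp hratio)
    · obtain ⟨ha, hb, hc⟩ := hsig n (by omega)
      exact smaller_root_pos ha hb hc
    · exact smaller_root_isRoot (hsig n (by omega)).1.ne' (hdisc n (by omega))
  intro n hn
  rcases le_or_gt n k with h | h
  · exact hupos n hn h
  · exact hpos n h.le
end

section
/- Let g3(n)=α1 n+α0, g2(n)=β1 n+β0, g1(n)=γ1 n+γ0 be real polynomials of degree at most 1 with g3(n) > 0, g2(n) > 0 and g1(n) < 0 for all integers n ≥ 0, and with g2(n)² + 4 g3(n) g1(n) ≥ 0 for all n ≥ 1. Let λ_n and Λ_n be the smaller and larger roots of χ_n(x) = g3(n)x² − g2(n)x − g1(n). Suppose (λ_n)_{n≥1} is increasing with finite limit λ_∞, and that λ_∞ < Λ_n for every n ≥ 1. If (u_n)_{n≥-1} is a solution of g3(n)u_n = g2(n)u_{n-1} + g1(n)u_{n-2} (n ≥ 1) and there is k ≥ 1 with u_{-1} > 0, u_0 > 0, …, u_k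 > 0 and u_k/u_{k-1} ≥ λ_∞, then u_n > 0 for every n ≥ −1. -/
open Filter

/-- The larger root `Λ_n` of the `n`-th characteristic polynomial. -/
noncomputable def charRootHi (α1 α0 β1 β0 γ1 γ0 : ℝ) (n : ℤ) : ℝ :=
  ((β1 * (n : ℝ) + β0) +
      Real.sqrt ((β1 * (n : ℝ) + β0) ^ 2 +
        4 * (α1 * (n : ℝ) + α0) * (γ1 * (n : ℝ) + γ0))) /
    (2 * (α1 * (n : ℝ) + α0))

/-!
Write `λ = λ_∞`. Since `λ_n ↑ λ`, we have `λ_n ≤ λ < Λ_n`, so `χ_n(λ) ≤ 0` for all `n ≥ 1`,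
which with the sign pattern forces `λ > 0`. The lower ratio bound `u_n ≥ λ u_{n-1}` then
propagates: `g3(n) λ u_n = g2(n) λ u_{n-1} + g1(n) λ u_{n-2} ≥ (g2(n) λ + g1(n)) u_{n-1}
≥ g3(n) λ² u_{n-1}`, because `g1(n) < 0` and `λ u_{n-2} ≤ u_{n-1}`. In particular each
`u_n ≥ λ u_{n-1}` stays positive.
-/

theorem le_of_tendsto_of_le_add_one {α : Type*} [TopologicalSpace α] [Preorder α]
    [OrderClosedTopology α] {f : ℤ → α} {L : α} (hf : ∀ n, 1 ≤ n → f n ≤ f (n + 1))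
    (hL : Tendsto (fun n : ℕ => f ((n : ℤ) + 1)) atTop (nhds L)) (n : ℤ) (hn : 1 ≤ n) :
    f n ≤ L := by
  have hmono : Monotone (fun n : ℕ => f ((n : ℤ) + 1)) :=
    monotone_nat_of_le_succ fun m => by simpa [add_assoc] using hf ((m : ℤ) + 1) (by omega)
  have h := hmono.ge_of_tendsto hL (n - 1).toNat
  rwa [show ((n - 1).toNat : ℤ) + 1 = n by omega] at h

theorem mul_sq_le_of_mem_Ico_roots {a b c x : ℝ} (ha : 0 < a)
    (hlo : (b - Real.sqrt (b ^ 2 + 4 * a * c)) / (2 * a) ≤ x)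
    (hhi : x < (b + Real.sqrt (b ^ 2 + 4 * a * c)) / (2 * a)) :
    a * x ^ 2 ≤ b * x + c := by
  rw [div_le_iff₀ (by positivity)] at hlo
  rw [lt_div_iff₀ (by positivity)] at hhi
  have hdisc : 0 ≤ b ^ 2 + 4 * a * c := by
    by_contra! h
    rw [Real.sqrt_eq_zero_of_nonpos h.le] at hlo hhi
    linarith
  have hs := Real.sq_sqrt hdisc
  nlinarith [sq_nonneg (2 * a * x - b)]

theorem pos_of_mul_sq_le {a b c x : ℝ} (ha : 0 < a) (hb : 0 < b) (hc : c < 0)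
    (hx : a * x ^ 2 ≤ b * x + c) : 0 < x := by
  by_contra! h
  nlinarith [mul_nonneg ha.le (sq_nonneg x)]

theorem mul_le_of_recurrence {a b c x u₀ u₁ u₂ : ℝ} (ha : 0 < a) (hc : c < 0) (hx : 0 < x)
    (hchi : a * x ^ 2 ≤ b * x + c) (hu₁ : 0 ≤ u₁) (hratio : x * u₀ ≤ u₁)
    (hrec : a * u₂ = b * u₁ + c * u₀) :
    x * u₁ ≤ u₂ := by
  have key : a * x * (x * u₁) ≤ a * x * u₂ :=
    calc a * x * (x * u₁) = a * x ^ 2 * u₁ := by ring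
      _ ≤ (b * x + c) * u₁ := mul_le_mul_of_nonneg_right hchi hu₁
      _ = b * x * u₁ + c * u₁ := by ring
      _ ≤ b * x * u₁ + c * (x * u₀) :=
          add_le_add_right (mul_le_mul_of_nonpos_left hratio hc.le) _
      _ = a * x * u₂ := by linear_combination (-x) * hrec
  exact le_of_mul_le_mul_left key (by positivity)

theorem pos_and_mul_le_of_recurrence {a b c u : ℤ → ℝ} {x : ℝ} {k : ℤ} (hx : 0 < x)
    (ha : ∀ n, k < n → 0 < a n) (hc : ∀ n, k < n → c n < 0)
    (hchi : ∀ n, k < n → a n * x ^ 2 ≤ b n * x + c n)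
    (hu : ∀ n, k < n → a n * u n = b n * u (n - 1) + c n * u (n - 2))
    (hk : 0 < u k) (hratio : x * u (k - 1) ≤ u k) (n : ℤ) (hn : k ≤ n) :
    0 < u n ∧ x * u (n - 1) ≤ u n := by
  induction n, hn using Int.leInduction with
  | base => exact ⟨hk, hratio⟩
  | succ n hkn ih =>
    have hrec := hu (n + 1) (by omega)
    rw [add_sub_cancel_right, show n + 1 - 2 = n - 1 by ring] at hrec
    have hstep := mul_le_of_recurrence (ha (n + 1) (by omega)) (hc (n + 1) (by omega)) hx
      (hchi (n + 1) (by omega)) ih.1.le ih.2 hrec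
    rw [add_sub_cancel_right]
    exact ⟨lt_of_lt_of_le (mul_pos hx ih.1) hstep, hstep⟩

theorem stmt_15_general (α1 α0 β1 β0 γ1 γ0 lamInf : ℝ) (u : ℤ → ℝ) (k : ℤ)
    (hsig : ∀ n : ℤ, 0 ≤ n →
      0 < α1 * (n : ℝ) + α0 ∧ 0 < β1 * (n : ℝ) + β0 ∧ γ1 * (n : ℝ) + γ0 < 0)
    (hinc : ∀ n : ℤ, 1 ≤ n →
      charRootLo α1 α0 β1 β0 γ1 γ0 n ≤ charRootLo α1 α0 β1 β0 γ1 γ0 (n + 1))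
    (hlim : Tendsto (fun n : ℕ => charRootLo α1 α0 β1 β0 γ1 γ0 ((n : ℤ) + 1)) atTop
      (nhds lamInf))
    (hsep : ∀ n : ℤ, 1 ≤ n → lamInf < charRootHi α1 α0 β1 β0 γ1 γ0 n)
    (hu : ∀ n : ℤ, 1 ≤ n →
      (α1 * (n : ℝ) + α0) * u n =
        (β1 * (n : ℝ) + β0) * u (n - 1) + (γ1 * (n : ℝ) + γ0) * u (n - 2))
    (hk : 1 ≤ k)
    (hupos : ∀ n : ℤ, -1 ≤ n → n ≤ k → 0 < u n)
    (hratio : lamInf ≤ u k / u (k - 1)) :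
    ∀ n : ℤ, -1 ≤ n → 0 < u n := by
  have hchi : ∀ n : ℤ, 1 ≤ n → (α1 * (n : ℝ) + α0) * lamInf ^ 2 ≤
      (β1 * (n : ℝ) + β0) * lamInf + (γ1 * (n : ℝ) + γ0) := fun n hn =>
    mul_sq_le_of_mem_Ico_roots (hsig n (by omega)).1
      (le_of_tendsto_of_le_add_one hinc hlim n hn) (hsep n hn)
  have hpos : 0 < lamInf :=
    pos_of_mul_sq_le (hsig 1 (by norm_num)).1 (hsig 1 (by norm_num)).2.1
      (hsig 1 (by norm_num)).2.2 (hchi 1 le_rfl)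
  have hratio' : lamInf * u (k - 1) ≤ u k :=
    (le_div_iff₀ (hupos (k - 1) (by omega) (by omega))).mp hratio
  intro n hn
  rcases le_or_gt n k with hnk | hkn
  · exact hupos n hn hnk
  · exact (pos_and_mul_le_of_recurrence (a := fun n : ℤ => α1 * (n : ℝ) + α0)
      (b := fun n : ℤ => β1 * (n : ℝ) + β0) (c := fun n : ℤ => γ1 * (n : ℝ) + γ0) hpos
      (fun n hn => (hsig n (by omega)).1) (fun n hn => (hsig n (by omega)).2.2)
      (fun n hn => hchi n (by omega)) (fun n hn => hu n (by omega))
      (hupos k (by omega) le_rfl) hratio' n hkn.le).1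

/-- Signature `(+,−)`, nonnegative discriminants, `(λ_n)` increasing with
finite limit `λ_∞` and `λ_∞ < Λ_n` for all `n ≥ 1`: if a solution `u` satisfies
`u (-1), …, u k > 0` and `u k / u (k-1) ≥ λ_∞` for some `k ≥ 1`, then `u n > 0` for
every `n ≥ −1`. -/
theorem stmt_15 (α1 α0 β1 β0 γ1 γ0 lamInf : ℝ) (u : ℤ → ℝ) (k : ℤ)
    (hsig : ∀ n : ℤ, 0 ≤ n →
      0 < α1 * (n : ℝ) + α0 ∧ 0 < β1 * (n : ℝ) + β0 ∧ γ1 * (n : ℝ) + γ0 < 0)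
    (hdisc : ∀ n : ℤ, 1 ≤ n →
      0 ≤ (β1 * (n : ℝ) + β0) ^ 2 + 4 * (α1 * (n : ℝ) + α0) * (γ1 * (n : ℝ) + γ0))
    (hinc : ∀ n : ℤ, 1 ≤ n →
      charRootLo α1 α0 β1 β0 γ1 γ0 n ≤ charRootLo α1 α0 β1 β0 γ1 γ0 (n + 1))
    (hlim : Tendsto (fun n : ℕ => charRootLo α1 α0 β1 β0 γ1 γ0 ((n : ℤ) + 1)) atTop
      (nhds lamInf))
    (hsep : ∀ n : ℤ, 1 ≤ n → lamInf < charRootHi α1 α0 β1 β0 γ1 γ0 n)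
    (hu : ∀ n : ℤ, 1 ≤ n →
      (α1 * (n : ℝ) + α0) * u n =
        (β1 * (n : ℝ) + β0) * u (n - 1) + (γ1 * (n : ℝ) + γ0) * u (n - 2))
    (hk : 1 ≤ k)
    (hupos : ∀ n : ℤ, -1 ≤ n → n ≤ k → 0 < u n)
    (hratio : lamInf ≤ u k / u (k - 1)) :
    ∀ n : ℤ, -1 ≤ n → 0 < u n :=
  stmt_15_general α1 α0 β1 β0 γ1 γ0 lamInf u k hsig hinc hlim hsep hu hk hupos hratio
end

section
/- Let β1, β0, γ0 be rational numbers with β1 ≠ 0, γ0 ≠ 0 and β1 n + β0 ≠ 0 for every integer n ≥ 0. If (u_n)_{n≥-1} is a minimal solution of the recurrence u_n = (β1 n + β0) u_{n-1} + γ0 u_{n-2} (n ≥ 1), then u_{-1} ≠ 0 and the ratio u_0/u_{-1} is irrational. -/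
open Filter

/-!
Reindex the minimal solution as `X k = u (k - 1)`, with dominant partner `Y`. Since `|q k| → ∞`,
every nonzero solution either grows or decays faster than any geometric sequence. Either way
`X` decays superexponentially: if `Y` decays, then `|X| ≤ |Y|` eventually; if `Y` grows,
telescoping `X / Y` against the Casoratian `(-g) ^ k * w` gives `|X n| ≤ 2 |w| |g| ^ n / |Y n|`.
If `u 0 / u (-1)` were rational (or `u (-1) = 0`), a multiple of `X` would have integer initial
values, and for a common denominator `d` of the coefficients the integers `d ^ n * X n` would
tend to `0`. So `X` would vanish at two consecutive indices, hence everywhere as `g ≠ 0`,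
contradicting `w ≠ 0`.
-/

open Topology

lemma Filter.eventually_atTop_of_eventually_succ {P : ℕ → Prop}
    (h : ∀ᶠ n in atTop, P (n + 1)) : ∀ᶠ n in atTop, P n := by
  rw [← map_add_atTop_eq_nat 1]
  exact h

lemma tendsto_pow_mul_of_forall_eventually_abs_succ_le {a : ℕ → ℝ}
    (h : ∀ ρ > 0, ∀ᶠ n in atTop, |a (n + 1)| ≤ ρ * |a n|) (D : ℝ) :
    Tendsto (fun n => D ^ n * a n) atTop (𝓝 0) := by
  have hρ : (0 : ℝ) < (2 * (|D| + 1))⁻¹ := by positivity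
  refine (summable_of_ratio_norm_eventually_le (r := 1 / 2) (by norm_num) ?_).tendsto_atTop_zero
  filter_upwards [h _ hρ] with n hn
  have hD : |D| * (2 * (|D| + 1))⁻¹ ≤ 1 / 2 := by
    rw [← div_eq_mul_inv, div_le_iff₀ (by positivity)]; linarith [abs_nonneg D]
  simp only [Real.norm_eq_abs, abs_mul, abs_pow, pow_succ]
  calc |D| ^ n * |D| * |a (n + 1)| ≤ |D| ^ n * |D| * ((2 * (|D| + 1))⁻¹ * |a n|) := by gcongr
    _ = |D| * (2 * (|D| + 1))⁻¹ * (|D| ^ n * |a n|) := by ring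
    _ ≤ 1 / 2 * (|D| ^ n * |a n|) := by gcongr

lemma tendsto_abs_mul_add_atTop {b₁ : ℝ} (hb₁ : b₁ ≠ 0) (b₀ : ℝ) :
    Tendsto (fun x => |b₁ * x + b₀|) atTop atTop := by
  have h : (fun x => |b₁ * x + b₀|) = fun x => |b₁| * |x + b₀ / b₁| := by
    ext x; rw [← abs_mul, mul_add, mul_div_cancel₀ _ hb₁]
  rw [h]
  exact (tendsto_abs_atTop_atTop.comp (tendsto_atTop_add_const_right _ _ tendsto_id))
    |>.const_mul_atTop (abs_pos.2 hb₁)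

lemma natCast_mul_ratCast_mem_bot {x : ℚ} {n : ℕ} (h : x.den ∣ n) :
    (n : ℝ) * x ∈ (⊥ : Subring ℝ) := by
  obtain ⟨c, rfl⟩ := h
  refine Subring.mem_bot.2 ⟨c * x.num, ?_⟩
  have hx : (x.num : ℝ) = x * x.den := by exact_mod_cast (Rat.mul_den_eq_num x).symm
  push_cast
  rw [hx]
  ring

lemma exists_mul_mem_bot_of_not_irrational {x y : ℝ} (hxy : ¬(x = 0 ∧ y = 0))
    (h : ¬(x ≠ 0 ∧ Irrational (y / x))) :
    ∃ c ≠ 0, c * x ∈ (⊥ : Subring ℝ) ∧ c * y ∈ (⊥ : Subring ℝ) := by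
  by_cases hx : x = 0
  · have hy : y ≠ 0 := fun hy => hxy ⟨hx, hy⟩
    exact ⟨y⁻¹, inv_ne_zero hy, by simp [hx], by simp [hy, one_mem]⟩
  · obtain ⟨r, hr⟩ : y / x ∈ Set.range ((↑) : ℚ → ℝ) := by
      simpa [Irrational, hx] using h
    refine ⟨r.den / x, by positivity, by simp [hx], ?_⟩
    rw [div_mul_eq_mul_div, mul_div_assoc, ← hr]
    exact natCast_mul_ratCast_mem_bot dvd_rfl

lemma eventually_eq_zero_of_mem_bot {z : ℕ → ℝ} (hz : ∀ n, z n ∈ (⊥ : Subring ℝ))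
    (h : Tendsto z atTop (𝓝 0)) : ∀ᶠ n in atTop, z n = 0 := by
  filter_upwards [h.eventually (Metric.ball_mem_nhds 0 one_pos)] with n hn
  obtain ⟨m, hm⟩ := Subring.mem_bot.1 (hz n)
  rw [← hm, dist_zero_right, Real.norm_eq_abs, ← Int.cast_abs,
    ← Int.cast_one, Int.cast_lt, Int.abs_lt_one_iff] at hn
  rw [← hm, hn, Int.cast_zero]

lemma pow_mul_abs_le_of_forall_ge {V : ℕ → ℝ} {R : ℝ} {N : ℕ} (hR : 0 ≤ R)
    (h : ∀ n ≥ N, R * |V n| ≤ |V (n + 1)|) {n : ℕ} (hn : N ≤ n) (m : ℕ) :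
    R ^ m * |V n| ≤ |V (n + m)| := by
  induction m with
  | zero => simp
  | succ m ih =>
    calc R ^ (m + 1) * |V n| = R * (R ^ m * |V n|) := by ring
      _ ≤ R * |V (n + m)| := by gcongr
      _ ≤ |V (n + (m + 1))| := h _ (by omega)

def SolvesRec (q : ℕ → ℝ) (g : ℝ) (Y : ℕ → ℝ) : Prop :=
  ∀ k, Y (k + 2) = q k * Y (k + 1) + g * Y k

namespace SolvesRec

variable {q : ℕ → ℝ} {g : ℝ} {X Y : ℕ → ℝ}

lemma mul_add_mul (hX : SolvesRec q g X) (hY : SolvesRec q g Y) (c d : ℝ) :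
    SolvesRec q g (fun k => c * X k + d * Y k) := fun k => by
  dsimp only
  rw [hX k, hY k]
  ring

lemma const_mul (hY : SolvesRec q g Y) (c : ℝ) : SolvesRec q g (fun k => c * Y k) := fun k => by
  dsimp only
  rw [hY k]
  ring

lemma eq_zero (hY : SolvesRec q g Y) (h₀ : Y 0 = 0) (h₁ : Y 1 = 0) (k : ℕ) : Y k = 0 := by
  induction k using Nat.twoStepInduction with
  | zero => exact h₀
  | one => exact h₁
  | more k ih₀ ih₁ => rw [hY k, ih₀, ih₁, mul_zero, mul_zero, add_zero]

lemma initial_eq_zero (hg : g ≠ 0) (hY : SolvesRec q g Y) {k : ℕ} (h₀ : Y k = 0)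
    (h₁ : Y (k + 1) = 0) : Y 0 = 0 ∧ Y 1 = 0 := by
  induction k with
  | zero => exact ⟨h₀, h₁⟩
  | succ k ih =>
    refine ih ?_ h₀
    have h := hY k
    rw [h₀, h₁, mul_zero, zero_add] at h
    exact (mul_eq_zero.1 h.symm).resolve_left hg

lemma casoratian (hX : SolvesRec q g X) (hY : SolvesRec q g Y) (k : ℕ) :
    X (k + 1) * Y k - X k * Y (k + 1) = (-g) ^ k * (X 1 * Y 0 - X 0 * Y 1) := by
  induction k with
  | zero => simp
  | succ k ih =>
    rw [pow_succ, hX k, hY k]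
    linear_combination (-g) * ih

lemma casoratian_ne_zero (hX : SolvesRec q g X) (hY : SolvesRec q g Y)
    (hX₀ : ¬(X 0 = 0 ∧ X 1 = 0))
    (hind : ∀ c d : ℝ, (∀ k, c * X k + d * Y k = 0) → c = 0 ∧ d = 0) :
    X 1 * Y 0 - X 0 * Y 1 ≠ 0 := by
  intro hw
  have key (c d : ℝ) (h₀ : c * X 0 + d * Y 0 = 0) (h₁ : c * X 1 + d * Y 1 = 0) : d = 0 :=
    (hind c d ((hX.mul_add_mul hY c d).eq_zero h₀ h₁)).2
  refine hX₀ ⟨neg_eq_zero.1 (key (Y 0) (-X 0) (by ring) ?_),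
    neg_eq_zero.1 (key (Y 1) (-X 1) ?_ (by ring))⟩
  · linear_combination hw
  · linear_combination -hw

lemma div_succ_sub_div (hX : SolvesRec q g X) (hY : SolvesRec q g Y) {k : ℕ} (hk : Y k ≠ 0)
    (hk₁ : Y (k + 1) ≠ 0) :
    X (k + 1) / Y (k + 1) - X k / Y k =
      (-g) ^ k * (X 1 * Y 0 - X 0 * Y 1) / (Y k * Y (k + 1)) := by
  rw [← casoratian hX hY k]
  field_simp

lemma abs_mul_abs_succ_le (hY : SolvesRec q g Y) (n : ℕ) :
    |q n| * |Y (n + 1)| ≤ |Y (n + 2)| + |g| * |Y n| := by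
  rw [← abs_mul, ← abs_mul, show q n * Y (n + 1) = Y (n + 2) - g * Y n by rw [hY n]; ring]
  exact abs_sub _ _

lemma mul_abs_le_of_abs_le_abs_succ (hY : SolvesRec q g Y) {n : ℕ} {R : ℝ}
    (hqn : R + |g| ≤ |q n|) (h : |Y n| ≤ |Y (n + 1)|) : R * |Y (n + 1)| ≤ |Y (n + 2)| := by
  nlinarith [hY.abs_mul_abs_succ_le n, mul_le_mul_of_nonneg_left h (abs_nonneg g),
    mul_le_mul_of_nonneg_right hqn (abs_nonneg (Y (n + 1)))]

lemma abs_succ_le_mul_of_abs_le (hY : SolvesRec q g Y) {n : ℕ} {ρ : ℝ} (hρ : 0 < ρ)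
    (hqn : (1 + |g|) / ρ ≤ |q n|) (h : |Y (n + 2)| ≤ |Y n|) : |Y (n + 1)| ≤ ρ * |Y n| := by
  have hq : 1 + |g| ≤ ρ * |q n| := by rwa [div_le_iff₀' hρ] at hqn
  have h₁ : |q n| * |Y (n + 1)| ≤ (1 + |g|) * |Y n| := by
    nlinarith [hY.abs_mul_abs_succ_le n, abs_nonneg g]
  have hg : 0 < 1 + |g| := by positivity
  refine le_of_mul_le_mul_left ?_ hg
  nlinarith [mul_le_mul_of_nonneg_right hq (abs_nonneg (Y (n + 1)))]

/-- Once `|q n| ≥ 1 + |g|`, a single index with `|Y n| ≤ |Y (n + 1)|` makes `|Y|` increase from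
then on, and faster and faster as `|q n|` grows; without such an index `|Y|` decreases, and then
the recurrence gives `|Y (n + 1)| ≤ (1 + |g|) / |q n| * |Y n|`. -/
theorem growth_or_decay (hg : g ≠ 0) (hq : Tendsto (fun n => |q n|) atTop atTop)
    (hY : SolvesRec q g Y) (hY₀ : ¬(Y 0 = 0 ∧ Y 1 = 0)) :
    (∀ R, ∀ᶠ n in atTop, Y n ≠ 0 ∧ R * |Y n| ≤ |Y (n + 1)|) ∨
      ∀ ρ > 0, ∀ᶠ n in atTop, Y n ≠ 0 ∧ |Y (n + 1)| ≤ ρ * |Y n| := by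
  obtain ⟨N, hN⟩ := (hq.eventually_ge_atTop (1 + |g|)).exists_forall_of_atTop
  by_cases hgood : ∃ n₁ ≥ N, |Y n₁| ≤ |Y (n₁ + 1)|
  · obtain ⟨n₁, hn₁, hle⟩ := hgood
    have hmono : ∀ n ≥ n₁, |Y n| ≤ |Y (n + 1)| := by
      refine Nat.le_induction hle fun n hn ih => ?_
      simpa using hY.mul_abs_le_of_abs_le_abs_succ (hN n (by omega)) ih
    have hne : ∀ n ≥ n₁, Y (n + 1) ≠ 0 := fun n hn h₁ => by
      have h₀ : Y n = 0 := abs_nonpos_iff.1 (by simpa [h₁] using hmono n hn)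
      exact hY₀ (hY.initial_eq_zero hg h₀ h₁)
    refine Or.inl fun R => eventually_atTop_of_eventually_succ ?_
    filter_upwards [hq.eventually_ge_atTop (R + |g|), eventually_ge_atTop n₁] with n hqn hn
    exact ⟨hne n hn, hY.mul_abs_le_of_abs_le_abs_succ hqn (hmono n hn)⟩
  · push Not at hgood
    have hne : ∀ n ≥ N, Y n ≠ 0 := fun n hn h₀ => by
      simpa [h₀] using (abs_nonneg _).trans_lt (hgood n hn)
    refine Or.inr fun ρ hρ => ?_
    filter_upwards [hq.eventually_ge_atTop ((1 + |g|) / ρ), eventually_ge_atTop N] with n hqn hn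
    exact ⟨hne n hn, hY.abs_succ_le_mul_of_abs_le hρ hqn
      ((hgood (n + 1) (by omega)).trans (hgood n hn)).le⟩

/-- `X n / Y n` is minus the tail sum of the increments of `X / Y`, which the Casoratian identifies
as `(-g) ^ k * w / (Y k * Y (k + 1))`; once `|Y|` grows by the factor `R ≥ 2 |g|`, they shrink
geometrically with ratio `1 / 2`. -/
lemma abs_le_of_growth (hg : g ≠ 0) (hX : SolvesRec q g X) (hY : SolvesRec q g Y)
    (hlim : Tendsto (fun n => X n / Y n) atTop (𝓝 0)) {R : ℝ} (hR : 1 ≤ R) (hgR : 2 * |g| ≤ R)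
    {N : ℕ} (hN : ∀ n ≥ N, Y n ≠ 0 ∧ R * |Y n| ≤ |Y (n + 1)|) {n : ℕ} (hn : N ≤ n) :
    |X n| ≤ 2 * |X 1 * Y 0 - X 0 * Y 1| * |g| ^ n / |Y n| := by
  set w := X 1 * Y 0 - X 0 * Y 1
  have hYn : 0 < |Y n| := abs_pos.2 (hN n hn).1
  have hpow := pow_mul_abs_le_of_forall_ge (by linarith) (fun k hk => (hN k hk).2) hn
  have hstep (m : ℕ) : dist (X (n + m) / Y (n + m)) (X (n + m + 1) / Y (n + m + 1)) ≤
      2 * |w| * |g| ^ n / |Y n| ^ 2 / 2 / 2 ^ m := by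
    rw [dist_comm, Real.dist_eq, hX.div_succ_sub_div hY (hN _ (by omega)).1 (hN _ (by omega)).1,
      abs_div, abs_mul, abs_mul, abs_pow, abs_neg, pow_add]
    have h₁ : (2 * |g|) ^ m * |Y n| ≤ |Y (n + m)| :=
      calc (2 * |g|) ^ m * |Y n| ≤ R ^ m * |Y n| := by gcongr
        _ ≤ |Y (n + m)| := hpow m
    have h₂ : |Y n| ≤ |Y (n + m + 1)| :=
      calc |Y n| = 1 ^ (m + 1) * |Y n| := by ring
        _ ≤ R ^ (m + 1) * |Y n| := by gcongr
        _ ≤ |Y (n + m + 1)| := hpow (m + 1)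
    have hg' : 0 < |g| := abs_pos.2 hg
    calc |g| ^ n * |g| ^ m * |w| / (|Y (n + m)| * |Y (n + m + 1)|)
        ≤ |g| ^ n * |g| ^ m * |w| / ((2 * |g|) ^ m * |Y n| * |Y n|) := by
          gcongr
      _ = 2 * |w| * |g| ^ n / |Y n| ^ 2 / 2 / 2 ^ m := by
          rw [mul_pow]
          field_simp
  have hlim' : Tendsto (fun m => X (n + m) / Y (n + m)) atTop (𝓝 0) :=
    (hlim.comp (tendsto_add_atTop_nat n)).congr fun m => by rw [Function.comp_apply, add_comm]
  have h := dist_le_of_le_geometric_two_of_tendsto₀ hstep hlim'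
  rw [add_zero, dist_zero_right, Real.norm_eq_abs, abs_div, div_le_iff₀ hYn] at h
  calc |X n| ≤ 2 * |w| * |g| ^ n / |Y n| ^ 2 * |Y n| := h
    _ = 2 * |w| * |g| ^ n / |Y n| := by field_simp

theorem tendsto_pow_mul_of_tendsto_div (hg : g ≠ 0) (hq : Tendsto (fun n => |q n|) atTop atTop)
    (hX : SolvesRec q g X) (hY : SolvesRec q g Y) (hw : X 1 * Y 0 - X 0 * Y 1 ≠ 0)
    (hlim : Tendsto (fun n => X n / Y n) atTop (𝓝 0)) (D : ℝ) :
    Tendsto (fun n => D ^ n * X n) atTop (𝓝 0) := by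
  have hY₀ : ¬(Y 0 = 0 ∧ Y 1 = 0) := fun h => hw (by rw [h.1, h.2]; ring)
  rcases hY.growth_or_decay hg hq hY₀ with hgrowth | hdecay
  · obtain ⟨N, hN⟩ := (hgrowth (2 * |g| + 1)).exists_forall_of_atTop
    have hinv : ∀ ρ > 0, ∀ᶠ n in atTop, |(Y (n + 1))⁻¹| ≤ ρ * |(Y n)⁻¹| := fun ρ hρ => by
      filter_upwards [hgrowth ρ⁻¹, eventually_ge_atTop N] with n ⟨hn, hle⟩ hNn
      have hn₁ := (hN (n + 1) (by omega)).1
      rw [abs_inv, abs_inv, inv_le_comm₀ (abs_pos.2 hn₁) (by positivity), mul_inv, inv_inv]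
      exact hle
    have hlim' := ((tendsto_pow_mul_of_forall_eventually_abs_succ_le (a := fun n => (Y n)⁻¹)
      hinv (|D| * |g|)).abs.const_mul (2 * |X 1 * Y 0 - X 0 * Y 1|))
    rw [abs_zero, mul_zero] at hlim'
    refine squeeze_zero_norm' ?_ hlim'
    filter_upwards [eventually_ge_atTop N] with n hn
    have hXn := hX.abs_le_of_growth hg hY hlim (by linarith [abs_nonneg g]) (by linarith) hN hn
    simp only [norm_mul, norm_pow, Real.norm_eq_abs, abs_mul, abs_pow, abs_abs, abs_inv, mul_pow]
    calc |D| ^ n * |X n| ≤ |D| ^ n * (2 * |X 1 * Y 0 - X 0 * Y 1| * |g| ^ n / |Y n|) := by gcongr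
      _ = 2 * |X 1 * Y 0 - X 0 * Y 1| * (|D| ^ n * |g| ^ n * |Y n|⁻¹) := by ring
  · have hle : ∀ᶠ n in atTop, |X n| ≤ |Y n| := by
      have habs : Tendsto (fun n => |X n / Y n|) atTop (𝓝 0) := by simpa using hlim.abs
      filter_upwards [hdecay 1 one_pos, habs.eventually_lt_const one_pos] with n ⟨hn, _⟩ hlt
      rw [abs_div, div_lt_one (abs_pos.2 hn)] at hlt
      exact hlt.le
    have hYD := (tendsto_pow_mul_of_forall_eventually_abs_succ_le
      (fun ρ hρ => (hdecay ρ hρ).mono fun _ h => h.2) D).norm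
    rw [norm_zero] at hYD
    refine squeeze_zero_norm' ?_ hYD
    filter_upwards [hle] with n hn
    simp only [norm_mul, Real.norm_eq_abs]
    gcongr

lemma mul_pow_mem (hY : SolvesRec q g Y) {S : Subring ℝ} {d : ℝ} (hd : d ∈ S)
    (hdq : ∀ k, d * q k ∈ S) (hdg : d * g ∈ S) (h₀ : Y 0 ∈ S) (h₁ : Y 1 ∈ S) (k : ℕ) :
    d ^ k * Y k ∈ S := by
  induction k using Nat.twoStepInduction with
  | zero => simpa using h₀
  | one => simpa using mul_mem hd h₁
  | more k ih₀ ih₁ =>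
    have h : d ^ (k + 2) * Y (k + 2) =
        d * q k * (d ^ (k + 1) * Y (k + 1)) + d * g * d * (d ^ k * Y k) := by
      rw [hY k]
      ring
    rw [h]
    exact add_mem (mul_mem (hdq k) ih₁) (mul_mem (mul_mem hdg hd) ih₀)

theorem not_tendsto_div_of_mem_bot (hg : g ≠ 0) (hq : Tendsto (fun n => |q n|) atTop atTop)
    (hX : SolvesRec q g X) (hY : SolvesRec q g Y) (hw : X 1 * Y 0 - X 0 * Y 1 ≠ 0) {d : ℝ}
    (hd₀ : d ≠ 0) (hd : d ∈ (⊥ : Subring ℝ)) (hdq : ∀ k, d * q k ∈ (⊥ : Subring ℝ))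
    (hdg : d * g ∈ (⊥ : Subring ℝ)) (h₀ : X 0 ∈ (⊥ : Subring ℝ)) (h₁ : X 1 ∈ (⊥ : Subring ℝ)) :
    ¬Tendsto (fun n => X n / Y n) atTop (𝓝 0) := fun hlim => by
  obtain ⟨K, hK⟩ := (eventually_eq_zero_of_mem_bot (hX.mul_pow_mem hd hdq hdg h₀ h₁)
    (hX.tendsto_pow_mul_of_tendsto_div hg hq hY hw hlim d)).exists_forall_of_atTop
  have hXK (k : ℕ) (hk : K ≤ k) : X k = 0 :=
    (mul_eq_zero.1 (hK k hk)).resolve_left (pow_ne_zero _ hd₀)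
  obtain ⟨h₀, h₁⟩ := hX.initial_eq_zero hg (hXK K le_rfl) (hXK (K + 1) (by omega))
  exact hw (by rw [h₀, h₁]; ring)

end SolvesRec

lemma IsSol.solvesRec_shift {q : ℤ → ℝ} {g : ℝ} {u : ℤ → ℝ}
    (h : IsSol (fun _ => 1) q (fun _ => g) u) :
    SolvesRec (fun k => q (k + 1)) g (fun k => u (k - 1)) := fun k => by
  have hk := h (k + 1) (by omega)
  rw [one_mul, add_sub_cancel_right, show (k : ℤ) + 1 - 2 = k - 1 by ring] at hk
  push_cast
  rw [show (k : ℤ) + 2 - 1 = k + 1 by ring, add_sub_cancel_right, hk]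

lemma IsMinimal.exists_solvesRec {q : ℤ → ℝ} {g : ℝ} {u : ℤ → ℝ}
    (h : IsMinimal (fun _ => 1) q (fun _ => g) u) :
    ∃ X Y : ℕ → ℝ, SolvesRec (fun k => q (k + 1)) g X ∧ SolvesRec (fun k => q (k + 1)) g Y ∧
      X 0 = u (-1) ∧ X 1 = u 0 ∧ X 1 * Y 0 - X 0 * Y 1 ≠ 0 ∧
      Tendsto (fun n => X n / Y n) atTop (𝓝 0) := by
  obtain ⟨hu, ⟨n, hn, hun⟩, v, hv, hind, hlim⟩ := h
  have hreindex (n : ℤ) (hn : -1 ≤ n) : ∃ k : ℕ, (k : ℤ) - 1 = n := ⟨(n + 1).toNat, by omega⟩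
  have hX := hu.solvesRec_shift
  have hX₀ : ¬(u ((0 : ℕ) - 1) = 0 ∧ u ((1 : ℕ) - 1) = 0) := fun h₀ => by
    obtain ⟨k, rfl⟩ := hreindex n hn
    exact hun (hX.eq_zero h₀.1 h₀.2 k)
  refine ⟨_, _, hX, hv.solvesRec_shift, by simp, by simp,
    hX.casoratian_ne_zero hv.solvesRec_shift hX₀ fun c d hcd => hind c d fun n hn => ?_, ?_⟩
  · obtain ⟨k, rfl⟩ := hreindex n hn
    exact hcd k
  · rw [← tendsto_add_atTop_iff_nat 1]
    simpa using hlim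

theorem stmt_18_general (β1 β0 γ0 : ℚ) (hβ1 : β1 ≠ 0) (hγ0 : γ0 ≠ 0) (u : ℤ → ℝ)
    (hmin : IsMinimal (fun _ => 1) (fun n => (β1 : ℝ) * (n : ℝ) + (β0 : ℝ))
      (fun _ => (γ0 : ℝ)) u) :
    u (-1) ≠ 0 ∧ Irrational (u 0 / u (-1)) := by
  obtain ⟨X, Y, hX, hY, hX₀, hX₁, hw, hlim⟩ := hmin.exists_solvesRec
  by_contra h
  obtain ⟨c, hc, hc₀, hc₁⟩ := exists_mul_mem_bot_of_not_irrational
    (fun h' => hw (by rw [hX₀, hX₁, h'.1, h'.2]; ring)) h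
  have hq : Tendsto (fun k : ℕ => |(β1 : ℝ) * ((k + 1 : ℤ) : ℝ) + β0|) atTop atTop :=
    (tendsto_abs_mul_add_atTop (Rat.cast_ne_zero.2 hβ1) _).comp <|
      tendsto_intCast_atTop_atTop.comp <| tendsto_atTop_add_const_right _ 1 tendsto_natCast_atTop_atTop
  have hcw : c * X 1 * Y 0 - c * X 0 * Y 1 ≠ 0 := by
    rw [mul_assoc, mul_assoc, ← mul_sub]
    exact mul_ne_zero hc hw
  have hclim : Tendsto (fun n => c * X n / Y n) atTop (𝓝 0) := by
    simpa [mul_div_assoc] using hlim.const_mul c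
  have hden (x : ℚ) (hx : x.den ∣ β1.den * β0.den * γ0.den) :
      ((β1.den * β0.den * γ0.den : ℕ) : ℝ) * x ∈ (⊥ : Subring ℝ) :=
    natCast_mul_ratCast_mem_bot hx
  refine (hX.const_mul c).not_tendsto_div_of_mem_bot (Rat.cast_ne_zero.2 hγ0) hq hY hcw
    (d := (β1.den * β0.den * γ0.den : ℕ)) (by positivity) (natCast_mem _ _) (fun k => ?_)
    (hden γ0 (dvd_mul_left _ _)) (by rwa [hX₀]) (by rwa [hX₁]) hclim
  rw [mul_add, ← mul_assoc]
  exact add_mem (mul_mem (hden β1 (dvd_mul_of_dvd_left (dvd_mul_right _ _) _)) (intCast_mem _ _))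
    (hden β0 (dvd_mul_of_dvd_left (dvd_mul_left _ _) _))

/-- Let `β1, β0, γ0 ∈ ℚ` with `β1 ≠ 0`, `γ0 ≠ 0` and `β1 n + β0 ≠ 0` for
all integers `n ≥ 0`. If `u` is a minimal solution of
`u n = (β1 n + β0) u (n-1) + γ0 u (n-2)` (`n ≥ 1`), then `u (-1) ≠ 0` and `u 0 / u (-1)`
is irrational. -/
theorem stmt_18 (β1 β0 γ0 : ℚ) (hβ1 : β1 ≠ 0) (hγ0 : γ0 ≠ 0)
    (hβ : ∀ n : ℤ, 0 ≤ n → β1 * (n : ℚ) + β0 ≠ 0) (u : ℤ → ℝ)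
    (hmin : IsMinimal (fun _ => 1) (fun n => (β1 : ℝ) * (n : ℝ) + (β0 : ℝ))
      (fun _ => (γ0 : ℝ)) u) :
    u (-1) ≠ 0 ∧ Irrational (u 0 / u (-1)) :=
  stmt_18_general β1 β0 γ0 hβ1 hγ0 u hmin
end
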